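/- arXiv:1607.01324 — 3 statements merged into one kernel-verified Lean document; each statement's English description precedes it below -/
import Mathlib

section
/- Let (Λ, ξ) be a decorated D-lattice, and let v_1, ..., v_k ∈ Λ be hyperelliptic vectors (v_i² = -4, div(v_i) = 2, v_i* = ξ) with v_i ≠ ±v_j for i ≠ j, spanning a negative definite sublattice Ω. Then the saturation of Ω in Λ is isomorphic to the lattice D_k via the map (x_1,...,x_k) ↦ (1/2)Σ x_i v_i; in particular the v_i are pairwise orthogonal. Moreover the only hyperelliptic vectors contained in the saturation of Ω are ±v_1, ..., ±v_k. -/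
noncomputable section

open scoped BigOperators

/-- `x` has integer entries. -/
def IntVec {n : ℕ} (x : Fin n → ℚ) : Prop := ∀ i, ∃ a : ℤ, x i = (a : ℚ)

/-- The lattice `D_n = {x ∈ ℤⁿ : Σ xᵢ ≡ 0 mod 2}` (viewed inside `ℚⁿ`),
equipped with the negative of the Euclidean form `negE`. -/
def DSet (n : ℕ) : Set (Fin n → ℚ) :=
  {x | IntVec x ∧ ∃ a : ℤ, (∑ i, x i) = 2 * (a : ℚ)}

/-- The negative of the standard Euclidean bilinear form. -/
def negE {n : ℕ} (x y : Fin n → ℚ) : ℚ := - ∑ i, x i * y i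

/-- The vector `(1/2, …, 1/2)`. -/
def halfVec (n : ℕ) : Fin n → ℚ := fun _ => 1/2

/-- The lattice `Λ_N = U² ⊕ D_{N-2}` realized inside `ℚ^{N+2}`: integral vectors whose
coordinates of index `≥ 4` have even sum.  The first four coordinates carry the two
hyperbolic planes. -/
def LamSet (N : ℕ) : Set (Fin (N + 2) → ℚ) :=
  {x | IntVec x ∧ ∃ a : ℤ, (∑ i : Fin (N + 2), if 4 ≤ (i : ℕ) then x i else 0) = 2 * (a : ℚ)}

/-- The bilinear form of `Λ_N = U² ⊕ D_{N-2}`. -/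
def LamForm (N : ℕ) (x y : Fin (N + 2) → ℚ) : ℚ :=
  x 0 * y 1 + x 1 * y 0 + x 2 * y 3 + x 3 * y 2
    - ∑ i : Fin (N + 2), (if 4 ≤ (i : ℕ) then x i * y i else 0)

/-- The (negative definite) `E₈` lattice inside `ℚ⁸`: vectors that are integral or
half-integral, with even coordinate sum; the form is `negE`. -/
def E8Set : Set (Fin 8 → ℚ) :=
  {x | (IntVec x ∨ IntVec (x - halfVec 8)) ∧ ∃ a : ℤ, (∑ i, x i) = 2 * (a : ℚ)}

/-- Ambient space for the even unimodular lattice `II_{2,2+8k} = U² ⊕ E₈^k`. -/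
abbrev IIAmb (k : ℕ) := (Fin 4 → ℚ) × (Fin k → Fin 8 → ℚ)

/-- The form of `U²` on `ℚ⁴`. -/
def UForm (x y : Fin 4 → ℚ) : ℚ := x 0 * y 1 + x 1 * y 0 + x 2 * y 3 + x 3 * y 2

/-- The bilinear form of `II_{2,2+8k} = U² ⊕ E₈^k`. -/
def IIForm (k : ℕ) (x y : IIAmb k) : ℚ := UForm x.1 y.1 + ∑ j, negE (x.2 j) (y.2 j)

/-- The even unimodular lattice `II_{2,2+8k} = U² ⊕ E₈^k` inside its ambient space. -/
def IISet (k : ℕ) : Set (IIAmb k) := {p | IntVec p.1 ∧ ∀ j, p.2 j ∈ E8Set}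

/-- `v` has divisibility `d` in `Λ_N`: all pairings with lattice vectors are divisible
by `d`, and `d` is attained. -/
def HasDiv (N : ℕ) (v : Fin (N + 2) → ℚ) (d : ℤ) : Prop :=
  (∀ x ∈ LamSet N, ∃ a : ℤ, LamForm N v x = (d : ℚ) * a) ∧
  ∃ x ∈ LamSet N, LamForm N v x = (d : ℚ)

/-- `ξ` represents a decoration of `Λ_N`: an element of the dual lattice whose class in
the discriminant group has square `1` modulo `2ℤ`. -/
def IsDeco (N : ℕ) (ξ : Fin (N + 2) → ℚ) : Prop :=
  (∀ y ∈ LamSet N, ∃ a : ℤ, LamForm N ξ y = (a : ℚ)) ∧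
  ∃ a : ℤ, LamForm N ξ ξ = 1 + 2 * (a : ℚ)

section lemmas
variable {N : ℕ}

lemma lamForm_comm (x y : Fin (N+2) → ℚ) : LamForm N x y = LamForm N y x := by
  unfold LamForm
  rw [Finset.sum_congr rfl (fun i _ => by split_ifs <;> ring :
    ∀ i : Fin (N+2), i ∈ Finset.univ → (if 4 ≤ (i:ℕ) then x i * y i else 0) = (if 4 ≤ (i:ℕ) then y i * x i else 0))]
  ring

lemma lamForm_add_left (x y z : Fin (N+2) → ℚ) :
    LamForm N (x + y) z = LamForm N x z + LamForm N y z := by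
  unfold LamForm
  rw [Finset.sum_congr rfl (fun i _ => by simp only [Pi.add_apply]; split_ifs <;> ring :
    ∀ i : Fin (N+2), i ∈ Finset.univ → (if 4 ≤ (i:ℕ) then (x + y) i * z i else 0) =
      (if 4 ≤ (i:ℕ) then x i * z i else 0) + (if 4 ≤ (i:ℕ) then y i * z i else 0)),
    Finset.sum_add_distrib]
  simp only [Pi.add_apply]; ring

lemma lamForm_smul_left (a : ℚ) (x z : Fin (N+2) → ℚ) :
    LamForm N (a • x) z = a * LamForm N x z := by
  unfold LamForm
  rw [Finset.sum_congr rfl (fun i _ => by simp only [Pi.smul_apply, smul_eq_mul]; split_ifs <;> ring :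
    ∀ i : Fin (N+2), i ∈ Finset.univ → (if 4 ≤ (i:ℕ) then (a • x) i * z i else 0) =
      a * (if 4 ≤ (i:ℕ) then x i * z i else 0)), ← Finset.mul_sum]
  simp only [Pi.smul_apply, smul_eq_mul]; ring

lemma lamForm_zero_left (z : Fin (N+2) → ℚ) : LamForm N 0 z = 0 := by
  simp [LamForm]

lemma lamForm_sum_left {ι : Type*} [DecidableEq ι] (s : Finset ι) (f : ι → Fin (N+2) → ℚ) (z : Fin (N+2) → ℚ) :
    LamForm N (∑ i ∈ s, f i) z = ∑ i ∈ s, LamForm N (f i) z := by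
  induction s using Finset.induction_on with
  | empty => simp [lamForm_zero_left]
  | insert _ _ h ih => rw [Finset.sum_insert h, lamForm_add_left, ih, Finset.sum_insert h]

lemma lamForm_smul_right (a : ℚ) (x z : Fin (N+2) → ℚ) :
    LamForm N x (a • z) = a * LamForm N x z := by
  rw [lamForm_comm, lamForm_smul_left, lamForm_comm]

lemma lamForm_add_right (x y z : Fin (N+2) → ℚ) :
    LamForm N x (y + z) = LamForm N x y + LamForm N x z := by
  rw [lamForm_comm, lamForm_add_left, lamForm_comm x y, lamForm_comm x z]

lemma lamForm_sum_right {ι : Type*} [DecidableEq ι] (s : Finset ι) (f : ι → Fin (N+2) → ℚ) (z : Fin (N+2) → ℚ) :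
    LamForm N z (∑ i ∈ s, f i) = ∑ i ∈ s, LamForm N z (f i) := by
  rw [lamForm_comm, lamForm_sum_left]
  exact Finset.sum_congr rfl fun i _ => lamForm_comm _ _

lemma lamForm_sub_right (x y z : Fin (N+2) → ℚ) :
    LamForm N x (y - z) = LamForm N x y - LamForm N x z := by
  rw [sub_eq_add_neg, lamForm_add_right, ← neg_one_smul ℚ z, lamForm_smul_right]; ring

lemma lamSet_zero : (0 : Fin (N+2) → ℚ) ∈ LamSet N :=
  ⟨fun _ => ⟨0, by simp⟩, ⟨0, by simp⟩⟩

lemma lamSet_add {x y : Fin (N+2) → ℚ} (hx : x ∈ LamSet N) (hy : y ∈ LamSet N) :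
    x + y ∈ LamSet N := by
  obtain ⟨hxI, a, ha⟩ := hx; obtain ⟨hyI, b, hb⟩ := hy
  refine ⟨fun i => ?_, ⟨a + b, ?_⟩⟩
  · obtain ⟨p, hp⟩ := hxI i; obtain ⟨q, hq⟩ := hyI i
    exact ⟨p + q, by simp [hp, hq]⟩
  · rw [Finset.sum_congr rfl (fun i _ => by simp only [Pi.add_apply]; split_ifs <;> ring :
      ∀ i : Fin (N+2), i ∈ Finset.univ → (if 4 ≤ (i:ℕ) then (x + y) i else 0) =
        (if 4 ≤ (i:ℕ) then x i else 0) + (if 4 ≤ (i:ℕ) then y i else 0)),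
      Finset.sum_add_distrib, ha, hb]
    push_cast; ring

lemma lamSet_intsmul (a : ℤ) {x : Fin (N+2) → ℚ} (hx : x ∈ LamSet N) :
    (a : ℚ) • x ∈ LamSet N := by
  obtain ⟨hxI, b, hb⟩ := hx
  refine ⟨fun i => ?_, ⟨a * b, ?_⟩⟩
  · obtain ⟨p, hp⟩ := hxI i; exact ⟨a * p, by simp [hp]⟩
  · rw [Finset.sum_congr rfl (fun i _ => by simp only [Pi.smul_apply, smul_eq_mul]; split_ifs <;> ring :
      ∀ i : Fin (N+2), i ∈ Finset.univ → (if 4 ≤ (i:ℕ) then ((a:ℚ) • x) i else 0) =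
        (a:ℚ) * (if 4 ≤ (i:ℕ) then x i else 0)), ← Finset.mul_sum, hb]
    push_cast; ring

lemma lamSet_neg {x : Fin (N+2) → ℚ} (hx : x ∈ LamSet N) : -x ∈ LamSet N := by
  have := lamSet_intsmul (-1) hx
  simpa using this

lemma lamSet_sub {x y : Fin (N+2) → ℚ} (hx : x ∈ LamSet N) (hy : y ∈ LamSet N) :
    x - y ∈ LamSet N := by
  rw [sub_eq_add_neg]; exact lamSet_add hx (lamSet_neg hy)

lemma lamSet_intsum {ι : Type*} [DecidableEq ι] (s : Finset ι) (c : ι → ℚ) (u : ι → Fin (N+2) → ℚ)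
    (hc : ∀ i ∈ s, ∃ a : ℤ, c i = (a : ℚ)) (hu : ∀ i ∈ s, u i ∈ LamSet N) :
    (∑ i ∈ s, c i • u i) ∈ LamSet N := by
  induction s using Finset.induction_on with
  | empty => simpa using lamSet_zero
  | @insert j s hj ih =>
      rw [Finset.sum_insert hj]
      obtain ⟨a, ha⟩ := hc j (Finset.mem_insert_self j s)
      refine lamSet_add ?_ (ih (fun i hi => hc i (Finset.mem_insert_of_mem hi))
        (fun i hi => hu i (Finset.mem_insert_of_mem hi)))
      rw [ha]
      exact lamSet_intsmul a (hu j (Finset.mem_insert_self j s))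

lemma lamSet_even {x : Fin (N+2) → ℚ} (hx : x ∈ LamSet N) :
    ∃ b : ℤ, LamForm N x x = 2 * (b : ℚ) := by
  obtain ⟨hxI, a, ha⟩ := hx
  choose A hA using hxI
  have hsum : (∑ i : Fin (N+2), if 4 ≤ (i:ℕ) then A i else 0) = 2 * a := by
    have : ((∑ i : Fin (N+2), if 4 ≤ (i:ℕ) then A i else 0 : ℤ) : ℚ) = 2 * (a:ℚ) := by
      rw [← ha]; push_cast [apply_ite (Int.cast : ℤ → ℚ)]
      exact Finset.sum_congr rfl fun i _ => by split_ifs <;> simp [hA]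
    exact_mod_cast this
  have heven : Even (∑ i : Fin (N+2), if 4 ≤ (i:ℕ) then A i * A i else 0) := by
    have h1 : (∑ i : Fin (N+2), if 4 ≤ (i:ℕ) then A i * A i else 0)
        = (∑ i : Fin (N+2), if 4 ≤ (i:ℕ) then A i * A i - A i else 0)
          + (∑ i : Fin (N+2), if 4 ≤ (i:ℕ) then A i else 0) := by
      rw [← Finset.sum_add_distrib]
      exact Finset.sum_congr rfl fun i _ => by split_ifs <;> ring
    rw [h1, hsum]
    refine Even.add (Finset.even_sum _ fun i _ => ?_) ⟨a, by ring⟩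
    split_ifs with h
    · have : A i * A i - A i = (A i - 1) * ((A i - 1) + 1) := by ring
      rw [this]; exact Int.even_mul_succ_self _
    · exact Even.zero
  obtain ⟨b, hb⟩ := heven
  refine ⟨A 0 * A 1 + A 2 * A 3 - b, ?_⟩
  unfold LamForm
  have h2 : (∑ i : Fin (N+2), if 4 ≤ (i:ℕ) then x i * x i else 0)
      = ((∑ i : Fin (N+2), if 4 ≤ (i:ℕ) then A i * A i else 0 : ℤ) : ℚ) := by
    push_cast [apply_ite (Int.cast : ℤ → ℚ)]
    exact Finset.sum_congr rfl fun i _ => by split_ifs <;> simp [hA]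
  rw [h2, hb, hA 0, hA 1, hA 2, hA 3]
  push_cast; ring

end lemmas

/-- The map `D_k → ℚ^{N+2}`, `x ↦ (1/2) Σ xᵢ vᵢ`. -/
def spanHalf (N k : ℕ) (v : Fin k → (Fin (N + 2) → ℚ)) (x : Fin k → ℚ) :
    Fin (N + 2) → ℚ :=
  (1/2 : ℚ) • ∑ i, x i • v i

/-- The saturation in `Λ_N` of the sublattice generated by `v₁, …, v_k`. -/
def satSpan (N k : ℕ) (v : Fin k → (Fin (N + 2) → ℚ)) : Set (Fin (N + 2) → ℚ) :=
  {z | z ∈ LamSet N ∧ ∃ m : ℤ, m ≠ 0 ∧ ∃ c : Fin k → ℤ,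
    (m : ℚ) • z = ∑ i, (c i : ℚ) • v i}

/-- Let `(Λ, ξ)` be a decorated `D`-lattice (realized as `Λ_N` with decoration
represented by `ξv`), and let `v₁, …, v_k` be hyperelliptic vectors (`vᵢ² = -4`,
`div(vᵢ) = 2`, `vᵢ* = ξ`), pairwise distinct up to sign, spanning a negative definite
sublattice `Ω`.  Then (I) the formula `x ↦ (1/2) Σ xᵢ vᵢ` defines an isomorphism of
lattices `D_k ≅ Sat(Ω)` (in particular the `vᵢ` are pairwise orthogonal), and (II) the
only hyperelliptic vectors in `Sat(Ω)` are `±v₁, …, ±v_k`. -/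
theorem statement7 (N : ℕ) (hN : 3 ≤ N) (k : ℕ)
    (ξv : Fin (N + 2) → ℚ) (hξ : IsDeco N ξv)
    (v : Fin k → (Fin (N + 2) → ℚ))
    (hvL : ∀ i, v i ∈ LamSet N)
    (hv2 : ∀ i, LamForm N (v i) (v i) = -4)
    (hvdiv : ∀ i, HasDiv N (v i) 2)
    (hvξ : ∀ i, (1/2 : ℚ) • v i - ξv ∈ LamSet N)
    (hdist : ∀ i j, i ≠ j → v i ≠ v j ∧ v i ≠ -v j)
    (hnegdef : ∀ c : Fin k → ℚ, (∑ i, c i • v i) ≠ 0 →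
      LamForm N (∑ i, c i • v i) (∑ i, c i • v i) < 0) :
    (∀ i j, i ≠ j → LamForm N (v i) (v j) = 0) ∧
    Function.Injective (spanHalf N k v) ∧
    (∀ x y : Fin k → ℚ, LamForm N (spanHalf N k v x) (spanHalf N k v y) = negE x y) ∧
    spanHalf N k v '' DSet k = satSpan N k v ∧
    (∀ z ∈ satSpan N k v, LamForm N z z = -4 →
      (∀ x ∈ LamSet N, ∃ a : ℤ, LamForm N z x = 2 * (a : ℚ)) →
      (∃ x ∈ LamSet N, LamForm N z x = 2) →
      (1/2 : ℚ) • z - ξv ∈ LamSet N →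
      ∃ i, z = v i ∨ z = -v i) := by
  classical
  -- Step 1 : orthogonality
  have horth : ∀ i j, i ≠ j → LamForm N (v i) (v j) = 0 := by
    intro i j hij
    have hbji : LamForm N (v j) (v i) = LamForm N (v i) (v j) := lamForm_comm _ _
    set b := LamForm N (v i) (v j) with hb
    have hu : ((1/2:ℚ) • v i - (1/2:ℚ) • v j) ∈ LamSet N := by
      have h1 := lamSet_sub (hvξ i) (hvξ j)
      have e : ((1/2:ℚ) • v i - ξv) - ((1/2:ℚ) • v j - ξv)
          = (1/2:ℚ) • v i - (1/2:ℚ) • v j := by abel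
      rwa [e] at h1
    obtain ⟨p, hp⟩ := (hvdiv i).1 _ hu
    rw [lamForm_sub_right, lamForm_smul_right, lamForm_smul_right, hv2 i, ← hb] at hp
    -- hp : 1/2 * (-4) - 1/2 * b = 2 * p
    have hsum2 : ∀ ε : ℚ,
        (∑ t, (if t = i then (1:ℚ) else if t = j then ε else 0) • v t) = v i + ε • v j := by
      intro ε
      rw [← Finset.sum_subset (Finset.subset_univ ({i, j} : Finset (Fin k)))
        (fun t _ ht => by
          simp only [Finset.mem_insert, Finset.mem_singleton, not_or] at ht
          simp [ht.1, ht.2])]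
      rw [Finset.sum_pair hij]
      simp [hij, (Ne.symm hij)]
    have hexp : ∀ ε : ℚ, LamForm N (v i + ε • v j) (v i + ε • v j)
        = -4 - 4*ε^2 + 2*ε*b := by
      intro ε
      rw [lamForm_add_left, lamForm_add_right, lamForm_add_right, lamForm_smul_right,
        lamForm_smul_left, lamForm_smul_left, lamForm_smul_right, hv2 i, hv2 j, hbji, ← hb]
      ring
    have hkey : ∀ ε : ℚ, v i + ε • v j ≠ 0 →
        LamForm N (v i + ε • v j) (v i + ε • v j) < 0 := by
      intro ε hne
      have h2 := hnegdef (fun t => if t = i then (1:ℚ) else if t = j then ε else 0)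
        (by rw [hsum2]; exact hne)
      rwa [hsum2] at h2
    have hne1 : v i + (1:ℚ) • v j ≠ 0 := by
      rw [one_smul]
      intro h
      exact (hdist i j hij).2 (eq_neg_of_add_eq_zero_left h)
    have hne2 : v i + (-1:ℚ) • v j ≠ 0 := by
      rw [neg_one_smul]
      intro h
      rw [← sub_eq_add_neg] at h
      exact (hdist i j hij).1 (sub_eq_zero.1 h)
    have hlt1 := hkey 1 hne1
    have hlt2 := hkey (-1) hne2
    rw [hexp 1] at hlt1
    rw [hexp (-1)] at hlt2
    -- hlt1 : -4 - 4 + 2*b < 0 ; hlt2 : -4 - 4 - 2*b < 0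
    have hpl : (p:ℚ) < 0 := by nlinarith
    have hpg : (-2:ℚ) < (p:ℚ) := by nlinarith
    have hp0 : p = -1 := by
      have h1 : p < 0 := by exact_mod_cast hpl
      have h2 : (-2:ℤ) < p := by exact_mod_cast hpg
      omega
    rw [hp0] at hp
    push_cast at hp
    linarith
  -- Step 2 : the form identity
  have hform : ∀ x y : Fin k → ℚ,
      LamForm N (spanHalf N k v x) (spanHalf N k v y) = negE x y := by
    intro x y
    unfold spanHalf negE
    rw [lamForm_smul_left, lamForm_smul_right, lamForm_sum_left]
    have hterm : ∀ i : Fin k,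
        LamForm N (x i • v i) (∑ j, y j • v j) = (-4) * (x i * y i) := by
      intro i
      rw [lamForm_smul_left, lamForm_sum_right]
      rw [show (∑ j, LamForm N (v i) (y j • v j)) = y i * (-4) by
        rw [Finset.sum_eq_single i
          (fun t _ hti => by rw [lamForm_smul_right, horth i t (Ne.symm hti), mul_zero])
          (fun h => absurd (Finset.mem_univ i) h)]
        rw [lamForm_smul_right, hv2 i]]
      ring
    rw [Finset.sum_congr rfl fun i _ => hterm i, ← Finset.mul_sum]
    ring
  -- Step 3 : injectivity
  have hlin : ∀ x y : Fin k → ℚ,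
      spanHalf N k v x - spanHalf N k v y = spanHalf N k v (x - y) := by
    intro x y
    unfold spanHalf
    rw [← smul_sub, ← Finset.sum_sub_distrib]
    congr 1
    exact Finset.sum_congr rfl fun i _ => by rw [Pi.sub_apply, sub_smul]
  have hinj : Function.Injective (spanHalf N k v) := by
    intro x y h
    have h0 : negE (x - y) (x - y) = 0 := by
      rw [← hform, ← hlin, h, sub_self, lamForm_zero_left]
    have hsq : ∑ i, (x - y) i * (x - y) i = 0 := by
      unfold negE at h0; linarith
    have hz0 : ∀ i, (x - y) i = 0 := fun i =>
      mul_self_eq_zero.1 ((Finset.sum_eq_zero_iff_of_nonneg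
        (fun j _ => mul_self_nonneg _)).1 hsq i (Finset.mem_univ i))
    have hxy : x - y = 0 := funext fun i => hz0 i
    exact sub_eq_zero.1 hxy
  -- Step 4 : image = saturation
  have hsub1 : spanHalf N k v '' DSet k ⊆ satSpan N k v := by
    rintro w ⟨x, hx, rfl⟩
    obtain ⟨hxI, a, hxa⟩ := hx
    choose A hA using hxI
    have hmem : spanHalf N k v x ∈ LamSet N := by
      rcases Nat.eq_zero_or_pos k with hk | hk
      · have hz : spanHalf N k v x = 0 := by
          unfold spanHalf
          rw [show (Finset.univ : Finset (Fin k)) = ∅ by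
            subst hk; exact Finset.univ_eq_empty]
          simp
        rw [hz]; exact lamSet_zero
      · set i₀ : Fin k := ⟨0, hk⟩ with hi₀
        have hid : spanHalf N k v x
            = (∑ i, x i • ((1/2:ℚ) • (v i - v i₀))) + (a:ℚ) • v i₀ := by
          rw [Finset.sum_congr rfl (fun i _ => (by module :
            x i • ((1/2:ℚ) • (v i - v i₀))
              = (1/2:ℚ) • (x i • v i) - (x i * (1/2:ℚ)) • v i₀)),
            Finset.sum_sub_distrib, ← Finset.smul_sum, ← Finset.sum_smul,
            ← Finset.sum_mul, hxa]
          unfold spanHalf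
          module
        rw [hid]
        refine lamSet_add (lamSet_intsum _ _ _ (fun i _ => ⟨A i, hA i⟩) (fun i _ => ?_))
          (lamSet_intsmul a (hvL i₀))
        rw [show (1/2:ℚ) • (v i - v i₀)
            = ((1/2:ℚ) • v i - ξv) - ((1/2:ℚ) • v i₀ - ξv) by module]
        exact lamSet_sub (hvξ i) (hvξ i₀)
    refine ⟨hmem, 2, two_ne_zero, A, ?_⟩
    unfold spanHalf
    rw [smul_smul]
    push_cast
    norm_num
    exact Finset.sum_congr rfl fun i _ => by rw [hA i]
  have hsub2 : satSpan N k v ⊆ spanHalf N k v '' DSet k := by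
    rintro z ⟨hzL, m, hm, c, hmc⟩
    choose A hA using fun j => (hvdiv j).1 z hzL
    set x : Fin k → ℚ := fun j => -(A j : ℚ) with hxdef
    have hmx : ∀ j, (m:ℚ) * x j = 2 * c j := by
      intro j
      have h1 : LamForm N (v j) ((m:ℚ) • z) = (c j:ℚ) * (-4) := by
        rw [hmc, lamForm_sum_right]
        rw [show (∑ t, LamForm N (v j) ((c t:ℚ) • v t)) = (c j:ℚ) * (-4) by
          rw [Finset.sum_eq_single j
            (fun t _ htj => by rw [lamForm_smul_right, horth j t (Ne.symm htj), mul_zero])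
            (fun h => absurd (Finset.mem_univ j) h)]
          rw [lamForm_smul_right, hv2 j]]
      rw [lamForm_smul_right, hA j] at h1
      push_cast at h1 ⊢
      linear_combination (-(1/2)) * h1
    have hzspan : spanHalf N k v x = z := by
      apply smul_right_injective (Fin (N+2) → ℚ) (show (m:ℚ) ≠ 0 by exact_mod_cast hm)
      show (m:ℚ) • spanHalf N k v x = (m:ℚ) • z
      rw [hmc]
      unfold spanHalf
      rw [smul_smul, Finset.smul_sum]
      refine Finset.sum_congr rfl fun i _ => ?_
      rw [smul_smul]
      congr 1
      linear_combination (1/2) * hmx i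
    have hintx : ∀ j, ∃ a : ℤ, x j = (a:ℚ) := fun j => ⟨-A j, by push_cast; ring⟩
    have hsxi : (∑ j, x j) • ξv ∈ LamSet N := by
      have hid2 : (∑ j, x j) • ξv = z - ∑ j, x j • ((1/2:ℚ) • v j - ξv) := by
        rw [← hzspan]
        unfold spanHalf
        rw [Finset.sum_congr rfl (fun j _ => (by module :
          x j • ((1/2:ℚ) • v j - ξv) = (1/2:ℚ) • (x j • v j) - x j • ξv)),
          Finset.sum_sub_distrib, ← Finset.smul_sum, ← Finset.sum_smul]
        module
      rw [hid2]
      exact lamSet_sub hzL (lamSet_intsum _ _ _ (fun j _ => hintx j) (fun j _ => hvξ j))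
    obtain ⟨t, ht⟩ := hξ.2
    have hS : (∑ j, x j) = ((∑ j, -A j : ℤ) : ℚ) := by
      push_cast
      rfl
    rw [hS] at hsxi
    obtain ⟨b, hbb⟩ := lamSet_even hsxi
    rw [lamForm_smul_left, lamForm_smul_right, ht] at hbb
    have hZ : (∑ j, -A j) * ((∑ j, -A j) * (1 + 2*t)) = 2*b := by
      exact_mod_cast hbb
    have hSeven : Even (∑ j, -A j) := by
      have he : Even ((∑ j, -A j) * ((∑ j, -A j) * (1 + 2*t))) := ⟨b, by linarith⟩
      rcases Int.even_mul.1 he with h | h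
      · exact h
      · rcases Int.even_mul.1 h with h2 | h2
        · exact h2
        · exfalso; obtain ⟨w, hw⟩ := h2; omega
    obtain ⟨a', ha'⟩ := hSeven
    refine ⟨x, ⟨hintx, a', ?_⟩, hzspan⟩
    rw [hS, ha']
    push_cast
    ring
  have himg : spanHalf N k v '' DSet k = satSpan N k v := Set.Subset.antisymm hsub1 hsub2
  refine ⟨horth, hinj, hform, himg, ?_⟩
  -- Step 5 : hyperelliptic vectors in the saturation
  intro z hz hz4 _ _ hzξ
  obtain ⟨x, hxD, hxz⟩ := hsub2 hz
  have h4 : ∑ i, x i * x i = 4 := by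
    have h := hform x x
    rw [hxz, hz4] at h
    unfold negE at h
    linarith
  have hpz : ∀ a, LamForm N (v a) z = -2 * x a := by
    intro a
    rw [← hxz]
    unfold spanHalf
    rw [lamForm_smul_right, lamForm_sum_right]
    rw [show (∑ j, LamForm N (v a) (x j • v j)) = x a * (-4) by
      rw [Finset.sum_eq_single a
        (fun t _ hta => by rw [lamForm_smul_right, horth a t (Ne.symm hta), mul_zero])
        (fun h => absurd (Finset.mem_univ a) h)]
      rw [lamForm_smul_right, hv2 a]]
    ring
  have hxeven : ∀ a, ∃ y : ℤ, x a = 2 * (y:ℚ) := by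
    intro a
    obtain ⟨p, hp⟩ := (hvdiv a).1 _ hzξ
    obtain ⟨q, hq⟩ := (hvdiv a).1 _ (hvξ a)
    refine ⟨1 + q - p, ?_⟩
    rw [lamForm_sub_right, lamForm_smul_right, hpz a] at hp
    rw [lamForm_sub_right, lamForm_smul_right, hv2 a] at hq
    push_cast at hp hq ⊢
    linarith
  choose Y hY using hxeven
  have hY1 : ∑ i, Y i * Y i = 1 := by
    have hc : ((∑ i, Y i * Y i : ℤ):ℚ) = 1 := by
      push_cast
      rw [show (∑ i, (Y i:ℚ) * (Y i:ℚ)) = (1/4) * ∑ i, x i * x i by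
        rw [Finset.mul_sum]
        exact Finset.sum_congr rfl fun i _ => by rw [hY i]; ring]
      rw [h4]; norm_num
    exact_mod_cast hc
  have hex : ∃ i, Y i ≠ 0 := by
    by_contra h
    push_neg at h
    rw [Finset.sum_congr rfl (fun i _ => by rw [h i]; ring :
      ∀ i : Fin k, i ∈ Finset.univ → Y i * Y i = 0)] at hY1
    simp at hY1
  obtain ⟨i, hi⟩ := hex
  have h1le : 1 ≤ Y i * Y i := by
    nlinarith [Int.one_le_abs hi, abs_mul_abs_self (Y i)]
  have hsplit : Y i * Y i + ∑ t ∈ Finset.univ.erase i, Y t * Y t = 1 := by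
    rw [← hY1]
    exact Finset.add_sum_erase Finset.univ (fun t => Y t * Y t) (Finset.mem_univ i)
  have hnonneg : 0 ≤ ∑ t ∈ Finset.univ.erase i, Y t * Y t :=
    Finset.sum_nonneg fun t _ => mul_self_nonneg _
  have hrest : ∑ t ∈ Finset.univ.erase i, Y t * Y t = 0 := by linarith
  have hYii : Y i * Y i = 1 := by linarith
  have hzero : ∀ t, t ≠ i → Y t = 0 := fun t htne =>
    mul_self_eq_zero.1 ((Finset.sum_eq_zero_iff_of_nonneg
      (fun s _ => mul_self_nonneg _)).1 hrest t
      (Finset.mem_erase.2 ⟨htne, Finset.mem_univ t⟩))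
  have hzv : z = (Y i : ℚ) • v i := by
    rw [← hxz]
    unfold spanHalf
    rw [show (∑ t, x t • v t) = x i • v i by
      rw [Finset.sum_eq_single i
        (fun t _ hti => by rw [hY t, hzero t hti]; push_cast; simp)
        (fun h => absurd (Finset.mem_univ i) h)]]
    rw [hY i, smul_smul]
    congr 1
    ring
  rcases mul_self_eq_one_iff.1 hYii with h | h
  · exact ⟨i, Or.inl (by rw [hzv, h]; push_cast; simp)⟩
  · exact ⟨i, Or.inr (by rw [hzv, h]; push_cast; simp)⟩
end
end

section
/- Let (Λ, ξ) be a decorated D-lattice of dimension N, and let v ∈ Λ be primitive with v² < 0 and reflection ρ_v ∈ Γ_ξ (the subgroup of O⁺(Λ) fixing ξ). Then v is either nodal (v² = -2, div(v) = 1), or hyperelliptic (v² = -4, div(v) = 2, v* = ξ), or N ≡ 3 (mod 8) and v is unigonal with v² = -4, div(v) = 4, or N ≡ 4 (mod 8) and v is unigonal with v² = -2, div(v) = 2. -/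
noncomputable section

open scoped BigOperators

namespace SA
open Finset

variable {N : ℕ}

def tS (f : Fin (N+2) → ℤ) : ℤ := ∑ i : Fin (N+2), if 4 ≤ (i:ℕ) then f i else 0

def IB (w x : Fin (N+2) → ℤ) : ℤ :=
  w 0 * x 1 + w 1 * x 0 + w 2 * x 3 + w 3 * x 2
    - ∑ i : Fin (N+2), if 4 ≤ (i:ℕ) then w i * x i else 0

lemma IB_eq (w x : Fin (N+2) → ℤ) :
    IB w x = w 0 * x 1 + w 1 * x 0 + w 2 * x 3 + w 3 * x 2
      - tS (fun i => w i * x i) := rfl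

lemma c0 : ((0 : Fin (N+2)) : ℕ) = 0 := rfl
lemma c1 : ((1 : Fin (N+2)) : ℕ) = 1 := by
  have h : ((1 : Fin (N+2)) : ℕ) = 1 % (N+2) := rfl
  rw [h, Nat.mod_eq_of_lt (by omega)]
lemma c2 (hN : 3 ≤ N) : ((2 : Fin (N+2)) : ℕ) = 2 := by
  have h : ((2 : Fin (N+2)) : ℕ) = 2 % (N+2) := rfl
  rw [h, Nat.mod_eq_of_lt (by omega)]
lemma c3 (hN : 3 ≤ N) : ((3 : Fin (N+2)) : ℕ) = 3 := by
  have h : ((3 : Fin (N+2)) : ℕ) = 3 % (N+2) := rfl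
  rw [h, Nat.mod_eq_of_lt (by omega)]

lemma fne {a b : Fin (N+2)} (h : (a:ℕ) ≠ (b:ℕ)) : a ≠ b :=
  fun e => h (congrArg Fin.val e)

/-- standard basis -/
def ee (k : Fin (N+2)) : Fin (N+2) → ℤ := fun i => if i = k then 1 else 0

def chi : Fin (N+2) → ℤ := fun i => if 4 ≤ (i:ℕ) then 1 else 0

lemma tS_congr {f g : Fin (N+2) → ℤ} (h : ∀ i : Fin (N+2), 4 ≤ (i:ℕ) → f i = g i) :
    tS f = tS g := by
  unfold tS
  apply sum_congr rfl
  intro i _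
  by_cases h4 : 4 ≤ (i:ℕ)
  · simp [h4, h i h4]
  · simp [h4]

lemma tS_add (f g : Fin (N+2) → ℤ) : tS (fun i => f i + g i) = tS f + tS g := by
  unfold tS
  rw [← Finset.sum_add_distrib]
  apply sum_congr rfl
  intro i _
  split <;> simp

lemma tS_smul (c : ℤ) (f : Fin (N+2) → ℤ) : tS (fun i => c * f i) = c * tS f := by
  unfold tS
  rw [Finset.mul_sum]
  apply sum_congr rfl
  intro i _
  split <;> simp

lemma tS_neg (f : Fin (N+2) → ℤ) : tS (fun i => -f i) = -tS f := by
  have : (fun i : Fin (N+2) => -f i) = fun i => (-1) * f i := by funext i; ring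
  rw [this, tS_smul]; ring

lemma tS_sub (f g : Fin (N+2) → ℤ) : tS (fun i => f i - g i) = tS f - tS g := by
  have : (fun i : Fin (N+2) => f i - g i) = fun i => f i + (-1) * g i := by funext i; ring
  rw [this, tS_add, tS_smul]; ring

lemma dvd_tS {d : ℤ} {f : Fin (N+2) → ℤ} (h : ∀ i : Fin (N+2), 4 ≤ (i:ℕ) → d ∣ f i) :
    d ∣ tS f := by
  apply Finset.dvd_sum
  intro i _
  by_cases h4 : 4 ≤ (i:ℕ)
  · simpa [h4] using h i h4
  · simp [h4]

lemma tS_one (hN : 3 ≤ N) : tS (fun _ : Fin (N+2) => (1:ℤ)) = (N:ℤ) - 2 := by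
  unfold tS
  rw [Fin.sum_univ_eq_sum_range (fun k => if 4 ≤ k then (1:ℤ) else 0) (N+2)]
  have key : ∀ m : ℕ, ∑ k ∈ range (m+4), (if 4 ≤ k then (1:ℤ) else 0) = m := by
    intro m
    induction m with
    | zero => decide
    | succ p ih =>
        have : p + 1 + 4 = (p + 4) + 1 := by omega
        rw [this, Finset.sum_range_succ, ih]
        have : 4 ≤ p + 4 := by omega
        simp [this]
  have h2 : N + 2 = (N - 2) + 4 := by omega
  rw [h2, key]
  have : (((N:ℕ) - 2 : ℕ) : ℤ) = (N:ℤ) - 2 := by omega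
  rw [this]

lemma tS_ee (k : Fin (N+2)) : tS (ee k) = if 4 ≤ (k:ℕ) then 1 else 0 := by
  unfold tS ee
  rw [Finset.sum_eq_single k]
  · simp
  · intro b _ hbk; simp [hbk]
  · simp

lemma tS_mul_ee (w : Fin (N+2) → ℤ) (k : Fin (N+2)) :
    tS (fun i => w i * ee k i) = if 4 ≤ (k:ℕ) then w k else 0 := by
  unfold tS ee
  rw [Finset.sum_eq_single k]
  · simp
  · intro b _ hbk; simp [hbk]
  · simp

end SA

namespace SA
variable {N : ℕ}
open Finset

lemma ee_self (k : Fin (N+2)) : ee k k = 1 := by simp [ee]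
lemma ee_ne {i k : Fin (N+2)} (h : i ≠ k) : ee k i = 0 := by simp [ee, h]

lemma IB_ee0 (hN : 3 ≤ N) (w : Fin (N+2) → ℤ) : IB w (ee (0 : Fin (N+2))) = w 1 := by
  rw [IB_eq, tS_mul_ee]
  simp [ee, Fin.ext_iff, c0, c1, c2 hN, c3 hN, Nat.mod_eq_of_lt (show 2 < N + 2 by omega), Nat.mod_eq_of_lt (show 3 < N + 2 by omega)]

lemma IB_ee1 (hN : 3 ≤ N) (w : Fin (N+2) → ℤ) : IB w (ee (1 : Fin (N+2))) = w 0 := by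
  rw [IB_eq, tS_mul_ee]
  simp [ee, Fin.ext_iff, c0, c1, c2 hN, c3 hN, Nat.mod_eq_of_lt (show 2 < N + 2 by omega), Nat.mod_eq_of_lt (show 3 < N + 2 by omega)]

lemma IB_ee2 (hN : 3 ≤ N) (w : Fin (N+2) → ℤ) : IB w (ee (2 : Fin (N+2))) = w 3 := by
  rw [IB_eq, tS_mul_ee]
  simp [ee, Fin.ext_iff, c0, c1, c2 hN, c3 hN, Nat.mod_eq_of_lt (show 2 < N + 2 by omega), Nat.mod_eq_of_lt (show 3 < N + 2 by omega)]

lemma IB_ee3 (hN : 3 ≤ N) (w : Fin (N+2) → ℤ) : IB w (ee (3 : Fin (N+2))) = w 2 := by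
  rw [IB_eq, tS_mul_ee]
  simp [ee, Fin.ext_iff, c0, c1, c2 hN, c3 hN, Nat.mod_eq_of_lt (show 2 < N + 2 by omega), Nat.mod_eq_of_lt (show 3 < N + 2 by omega)]

lemma IB_ee_tail (hN : 3 ≤ N) (w : Fin (N+2) → ℤ) {k : Fin (N+2)} (hk : 4 ≤ (k:ℕ)) :
    IB w (ee k) = -(w k) := by
  rw [IB_eq, tS_mul_ee]
  have n0 : (0 : Fin (N+2)) ≠ k := fne (by rw [c0]; omega)
  have n1 : (1 : Fin (N+2)) ≠ k := fne (by rw [c1]; omega)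
  have n2 : (2 : Fin (N+2)) ≠ k := fne (by rw [c2 hN]; omega)
  have n3 : (3 : Fin (N+2)) ≠ k := fne (by rw [c3 hN]; omega)
  rw [ee_ne n0, ee_ne n1, ee_ne n2, ee_ne n3]
  simp [hk]

lemma IB_symm (w x : Fin (N+2) → ℤ) : IB w x = IB x w := by
  rw [IB_eq, IB_eq]
  rw [tS_congr (g := fun i => x i * w i) (fun i _ => by ring)]
  ring

lemma IB_add_right (w x y : Fin (N+2) → ℤ) :
    IB w (fun i => x i + y i) = IB w x + IB w y := by
  rw [IB_eq, IB_eq, IB_eq]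
  rw [show (fun i => w i * (x i + y i)) = fun i => w i * x i + w i * y i from
    funext fun i => by ring, tS_add]
  ring

lemma IB_smul_right (c : ℤ) (w x : Fin (N+2) → ℤ) :
    IB w (fun i => c * x i) = c * IB w x := by
  rw [IB_eq, IB_eq]
  rw [show (fun i => w i * (c * x i)) = fun i => c * (w i * x i) from
    funext fun i => by ring, tS_smul]
  ring

lemma IB_add_left (x y z : Fin (N+2) → ℤ) :
    IB (fun i => x i + y i) z = IB x z + IB y z := by
  rw [IB_symm, IB_add_right, IB_symm z x, IB_symm z y]

lemma IB_smul_left (c : ℤ) (x z : Fin (N+2) → ℤ) :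
    IB (fun i => c * x i) z = c * IB x z := by
  rw [IB_symm, IB_smul_right, IB_symm z x]

lemma IB_neg_right (w x : Fin (N+2) → ℤ) : IB w (fun i => -x i) = -IB w x := by
  rw [show (fun i => -x i) = fun i => (-1) * x i from funext fun i => by ring,
    IB_smul_right]
  ring

lemma IB_expand (x y : Fin (N+2) → ℤ) :
    IB (fun i => x i + y i) (fun i => x i + y i) =
      IB x x + 2 * IB x y + IB y y := by
  rw [IB_add_left, IB_add_right, IB_add_right, IB_symm y x]
  ring

lemma chi_head0 : chi (0 : Fin (N+2)) = 0 := by simp [chi, c0]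
lemma chi_head1 : chi (1 : Fin (N+2)) = 0 := by simp [chi, c1]
lemma chi_head2 (hN : 3 ≤ N) : chi (2 : Fin (N+2)) = 0 := by simp [chi, c2 hN, Nat.mod_eq_of_lt (show 2 < N + 2 by omega)]
lemma chi_head3 (hN : 3 ≤ N) : chi (3 : Fin (N+2)) = 0 := by simp [chi, c3 hN, Nat.mod_eq_of_lt (show 3 < N + 2 by omega)]

lemma IB_chi_right (hN : 3 ≤ N) (w : Fin (N+2) → ℤ) : IB w chi = -tS w := by
  rw [IB_eq, chi_head0, chi_head1, chi_head2 hN, chi_head3 hN]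
  rw [tS_congr (g := w) (fun i h4 => by simp [chi, h4])]
  ring

lemma tS_chi (hN : 3 ≤ N) : tS (chi : Fin (N+2) → ℤ) = (N:ℤ) - 2 := by
  rw [tS_congr (g := fun _ => (1:ℤ)) (fun i h4 => by simp [chi, h4]), tS_one hN]

lemma IB_chi_chi (hN : 3 ≤ N) : IB (chi : Fin (N+2) → ℤ) chi = -((N:ℤ) - 2) := by
  rw [IB_chi_right hN, tS_chi hN]

/-- parity: tS of pointwise-congruent-mod-2 functions -/
lemma tS_parity {f g : Fin (N+2) → ℤ} (h : ∀ i : Fin (N+2), 4 ≤ (i:ℕ) → 2 ∣ (f i - g i)) :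
    2 ∣ tS f - tS g := by
  rw [← tS_sub]
  exact dvd_tS h

lemma tS_sq_parity (w : Fin (N+2) → ℤ) : 2 ∣ tS (fun i => w i * w i) - tS w := by
  apply tS_parity
  intro i _
  have : w i * w i - w i = w i * (w i - 1) := by ring
  rw [this]
  rcases Int.even_or_odd (w i) with he | ho
  · exact Dvd.dvd.mul_right he.two_dvd _
  · obtain ⟨k, hk⟩ := ho
    exact Dvd.dvd.mul_left (⟨k, by omega⟩ : (2:ℤ) ∣ w i - 1) _

lemma IB_self_even (hN : 3 ≤ N) {x : Fin (N+2) → ℤ} (hx : 2 ∣ tS x) : 2 ∣ IB x x := by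
  have h1 : IB x x = 2 * (x 0 * x 1 + x 2 * x 3) - tS (fun i => x i * x i) := by
    rw [IB_eq]; ring
  obtain ⟨k, hk⟩ := tS_sq_parity x
  obtain ⟨a, ha⟩ := hx
  exact ⟨(x 0 * x 1 + x 2 * x 3) - k - a, by omega⟩

lemma tS_sq_mod8 (hN : 3 ≤ N) {w : Fin (N+2) → ℤ}
    (hodd : ∀ i : Fin (N+2), 4 ≤ (i:ℕ) → ¬ 2 ∣ w i) :
    (8:ℤ) ∣ tS (fun i => w i * w i) - ((N:ℤ) - 2) := by
  rw [← tS_one hN, ← tS_sub]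
  apply dvd_tS
  intro i h4
  have h := hodd i h4
  obtain ⟨k, hk⟩ : ∃ k, w i = 2 * k + 1 := ⟨(w i - 1)/2, by omega⟩
  have h2 : w i * w i - 1 = 4 * (k * (k+1)) := by rw [hk]; ring
  have h3 : 2 ∣ k * (k + 1) := (Int.even_mul_succ_self k).two_dvd
  obtain ⟨t, ht⟩ := h3
  exact ⟨t, by rw [h2, ht]; ring⟩

end SA

namespace SA
variable {N : ℕ}
open Finset

lemma cast_ite_int (c : Prop) [Decidable c] (a : ℤ) :
    (((if c then a else 0) : ℤ) : ℚ) = if c then (a:ℚ) else 0 := by split <;> simp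

lemma lamform_cast (v x : Fin (N+2) → ℚ) (w y : Fin (N+2) → ℤ)
    (hv : ∀ i, v i = (w i : ℚ)) (hx : ∀ i, x i = (y i : ℚ)) :
    LamForm N v x = ((IB w y : ℤ) : ℚ) := by
  unfold LamForm IB
  push_cast [cast_ite_int]
  simp only [hv, hx]

lemma mem_of_int {x : Fin (N+2) → ℚ} {y : Fin (N+2) → ℤ}
    (h : ∀ i, x i = (y i : ℚ)) (hy : 2 ∣ tS y) : x ∈ LamSet N := by
  obtain ⟨a, ha⟩ := hy
  refine ⟨fun i => ⟨y i, h i⟩, a, ?_⟩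
  have : (∑ i : Fin (N + 2), if 4 ≤ (i : ℕ) then x i else 0)
      = ((tS y : ℤ) : ℚ) := by
    unfold tS
    push_cast [cast_ite_int]
    simp only [h]
  rw [this, ha]
  push_cast
  ring

lemma int_of_mem {x : Fin (N+2) → ℚ} (hx : x ∈ LamSet N) :
    ∃ y : Fin (N+2) → ℤ, (∀ i, x i = (y i : ℚ)) ∧ 2 ∣ tS y := by
  obtain ⟨hint, a, ha⟩ := hx
  choose y hy using hint
  refine ⟨y, hy, a, ?_⟩
  have : (∑ i : Fin (N + 2), if 4 ≤ (i : ℕ) then x i else 0)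
      = ((tS y : ℤ) : ℚ) := by
    unfold tS
    push_cast [cast_ite_int]
    simp only [hy]
  rw [this] at ha
  exact_mod_cast ha

lemma lamset_neg {x : Fin (N+2) → ℚ} (hx : x ∈ LamSet N) : -x ∈ LamSet N := by
  obtain ⟨y, hy, ht⟩ := int_of_mem hx
  apply mem_of_int (y := fun i => -y i)
  · intro i; simp [hy i]
  · rw [tS_neg]; omega

lemma lamset_sub {x z : Fin (N+2) → ℚ} (hx : x ∈ LamSet N) (hz : z ∈ LamSet N) :
    x - z ∈ LamSet N := by
  obtain ⟨y, hy, ht⟩ := int_of_mem hx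
  obtain ⟨u, hu, hs⟩ := int_of_mem hz
  apply mem_of_int (y := fun i => y i - u i)
  · intro i; simp [hy i, hu i]
  · rw [tS_sub]; omega

lemma lamset_zcomb {x z : Fin (N+2) → ℚ} (a b : ℤ)
    (hx : x ∈ LamSet N) (hz : z ∈ LamSet N) :
    (fun i => (a:ℚ) * x i + (b:ℚ) * z i) ∈ LamSet N := by
  obtain ⟨y, hy, ht⟩ := int_of_mem hx
  obtain ⟨u, hu, hs⟩ := int_of_mem hz
  apply mem_of_int (y := fun i => a * y i + b * u i)
  · intro i; push_cast [hy i, hu i]; ring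
  · rw [tS_add, tS_smul, tS_smul]
    obtain ⟨p, hp⟩ := ht; obtain ⟨q, hq⟩ := hs
    exact ⟨a * p + b * q, by rw [hp, hq]; ring⟩

end SA

namespace SA
variable {N : ℕ}
open Finset

lemma lamform_add_right (x y z : Fin (N+2) → ℚ) :
    LamForm N x (fun i => y i + z i) = LamForm N x y + LamForm N x z := by
  have hs : (∑ i : Fin (N+2), if 4 ≤ (i:ℕ) then x i * (y i + z i) else 0)
      = (∑ i : Fin (N+2), if 4 ≤ (i:ℕ) then x i * y i else 0)
        + (∑ i : Fin (N+2), if 4 ≤ (i:ℕ) then x i * z i else 0) := by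
    rw [← Finset.sum_add_distrib]
    apply sum_congr rfl
    intro i _
    split <;> ring
  simp only [LamForm]
  rw [hs]
  ring

lemma lamform_smul_left (c : ℚ) (x y : Fin (N+2) → ℚ) :
    LamForm N (fun i => c * x i) y = c * LamForm N x y := by
  have hs : (∑ i : Fin (N+2), if 4 ≤ (i:ℕ) then (c * x i) * y i else 0)
      = c * (∑ i : Fin (N+2), if 4 ≤ (i:ℕ) then x i * y i else 0) := by
    rw [Finset.mul_sum]
    apply sum_congr rfl
    intro i _
    split <;> ring
  simp only [LamForm]
  rw [hs]
  ring

lemma lamform_smul_right (c : ℚ) (x y : Fin (N+2) → ℚ) :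
    LamForm N x (fun i => c * y i) = c * LamForm N x y := by
  have hs : (∑ i : Fin (N+2), if 4 ≤ (i:ℕ) then x i * (c * y i) else 0)
      = c * (∑ i : Fin (N+2), if 4 ≤ (i:ℕ) then x i * y i else 0) := by
    rw [Finset.mul_sum]
    apply sum_congr rfl
    intro i _
    split <;> ring
  simp only [LamForm]
  rw [hs]
  ring

lemma qsum_mul_ee (x : Fin (N+2) → ℚ) (k : Fin (N+2)) :
    (∑ i : Fin (N+2), if 4 ≤ (i:ℕ) then x i * ((ee k i : ℤ):ℚ) else 0)
      = if 4 ≤ (k:ℕ) then x k else 0 := by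
  rw [Finset.sum_eq_single k]
  · simp [ee]
  · intro b _ hbk; simp [ee, hbk]
  · simp

lemma lamform_eeq0 (hN : 3 ≤ N) (x : Fin (N+2) → ℚ) :
    LamForm N x (fun i => ((ee (0 : Fin (N+2)) i : ℤ):ℚ)) = x 1 := by
  simp only [LamForm]
  rw [qsum_mul_ee]
  simp [ee, Fin.ext_iff, c0, c1, c2 hN, c3 hN, Nat.mod_eq_of_lt (show 2 < N + 2 by omega), Nat.mod_eq_of_lt (show 3 < N + 2 by omega)]

lemma lamform_eeq1 (hN : 3 ≤ N) (x : Fin (N+2) → ℚ) :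
    LamForm N x (fun i => ((ee (1 : Fin (N+2)) i : ℤ):ℚ)) = x 0 := by
  simp only [LamForm]
  rw [qsum_mul_ee]
  simp [ee, Fin.ext_iff, c0, c1, c2 hN, c3 hN, Nat.mod_eq_of_lt (show 2 < N + 2 by omega), Nat.mod_eq_of_lt (show 3 < N + 2 by omega)]

lemma lamform_eeq2 (hN : 3 ≤ N) (x : Fin (N+2) → ℚ) :
    LamForm N x (fun i => ((ee (2 : Fin (N+2)) i : ℤ):ℚ)) = x 3 := by
  simp only [LamForm]
  rw [qsum_mul_ee]
  simp [ee, Fin.ext_iff, c0, c1, c2 hN, c3 hN, Nat.mod_eq_of_lt (show 2 < N + 2 by omega), Nat.mod_eq_of_lt (show 3 < N + 2 by omega)]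

lemma lamform_eeq3 (hN : 3 ≤ N) (x : Fin (N+2) → ℚ) :
    LamForm N x (fun i => ((ee (3 : Fin (N+2)) i : ℤ):ℚ)) = x 2 := by
  simp only [LamForm]
  rw [qsum_mul_ee]
  simp [ee, Fin.ext_iff, c0, c1, c2 hN, c3 hN, Nat.mod_eq_of_lt (show 2 < N + 2 by omega), Nat.mod_eq_of_lt (show 3 < N + 2 by omega)]

lemma lamform_eeq_tail (hN : 3 ≤ N) (x : Fin (N+2) → ℚ) {k : Fin (N+2)} (hk : 4 ≤ (k:ℕ)) :
    LamForm N x (fun i => ((ee k i : ℤ):ℚ)) = -(x k) := by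
  simp only [LamForm]
  rw [qsum_mul_ee]
  have n0 : (0 : Fin (N+2)) ≠ k := fne (by rw [c0]; omega)
  have n1 : (1 : Fin (N+2)) ≠ k := fne (by rw [c1]; omega)
  have n2 : (2 : Fin (N+2)) ≠ k := fne (by rw [c2 hN]; omega)
  have n3 : (3 : Fin (N+2)) ≠ k := fne (by rw [c3 hN]; omega)
  rw [ee_ne n0, ee_ne n1, ee_ne n2, ee_ne n3]
  simp [hk]

end SA

namespace SA
variable {N : ℕ}
open Finset

lemma rat_int_of_smul_mem {v : Fin (N+2) → ℚ} {w : Fin (N+2) → ℤ}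
    (hvw : ∀ i, v i = (w i : ℚ)) (hvmem : v ∈ LamSet N)
    (hw0 : ∃ i, w i ≠ 0)
    (hprim : ∀ (m : ℤ) (y : Fin (N + 2) → ℚ), y ∈ LamSet N → (m : ℚ) • y = v →
      m = 1 ∨ m = -1)
    {q : ℚ} (hq : (fun i => q * v i) ∈ LamSet N) :
    ∃ k : ℤ, q = (k : ℚ) := by
  obtain ⟨y, hy, hyt⟩ := int_of_mem hq
  set d : ℤ := (q.den : ℤ) with hd
  have hd0 : 0 < d := by positivity
  have hgcd : Int.gcd q.num d = 1 := q.reduced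
  have hco : IsCoprime d q.num := by
    rw [Int.isCoprime_iff_gcd_eq_one, Int.gcd_comm]
    exact hgcd
  have hdvd : ∀ i, d ∣ w i := by
    intro i
    have h1 : q * (w i : ℚ) = (y i : ℚ) := by rw [← hvw i]; exact hy i
    have h2 : (q.num : ℚ) * (w i : ℚ) = (y i : ℚ) * (d : ℚ) := by
      rw [← Rat.num_div_den q] at h1
      have hdq : ((q.den : ℚ)) ≠ 0 := by positivity
      field_simp at h1
      rw [hd]
      push_cast
      linarith [h1]
    have h3 : q.num * w i = y i * d := by exact_mod_cast h2
    exact hco.dvd_of_dvd_mul_left ⟨y i, by linarith⟩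
  obtain ⟨α, β, hab⟩ := hco
  set yc : Fin (N+2) → ℚ := fun i => (β:ℚ) * (q * v i) + (α:ℚ) * v i with hyc
  have hycm : yc ∈ LamSet N := lamset_zcomb β α hq hvmem
  have hqd : q * (d:ℚ) = (q.num : ℚ) := by
    have hden : ((q.den : ℚ)) ≠ 0 := by positivity
    conv_lhs => rw [← Rat.num_div_den q]
    rw [hd]
    push_cast
    field_simp
  have hkey : (d : ℚ) • yc = v := by
    funext i
    have : (d:ℚ) * ((β:ℚ) * (q * v i) + (α:ℚ) * v i)
        = ((β * q.num + α * d : ℤ) : ℚ) * v i := by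
      push_cast
      have : (d:ℚ) * ((β:ℚ) * (q * v i)) = (β:ℚ) * ((q * (d:ℚ)) * v i) := by ring
      rw [show (d:ℚ) * ((β:ℚ) * (q * v i) + (α:ℚ) * v i)
          = (β:ℚ) * ((q * (d:ℚ)) * v i) + (α:ℚ) * (d:ℚ) * v i from by ring, hqd]
      ring
    rw [Pi.smul_apply, smul_eq_mul, this, show β * q.num + α * d = 1 from by linarith [hab]]
    simp
  rcases hprim d yc hycm hkey with h1 | h1
  · refine ⟨q.num, ?_⟩
    have hden : q.den = 1 := by omega
    rw [← Rat.num_div_den q, hden]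
    simp
  · omega

end SA

namespace SA
variable {N : ℕ}
open Finset

lemma head_cases (hN : 3 ≤ N) (i : Fin (N+2)) (h : ¬ 4 ≤ (i:ℕ)) :
    i = 0 ∨ i = 1 ∨ i = 2 ∨ i = 3 := by
  have h4 : (i:ℕ) = 0 ∨ (i:ℕ) = 1 ∨ (i:ℕ) = 2 ∨ (i:ℕ) = 3 := by omega
  rcases h4 with h4 | h4 | h4 | h4
  · exact Or.inl (Fin.ext (by rw [h4, c0]))
  · exact Or.inr (Or.inl (Fin.ext (by rw [h4, c1])))
  · exact Or.inr (Or.inr (Or.inl (Fin.ext (by rw [h4, c2 hN]))))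
  · exact Or.inr (Or.inr (Or.inr (Fin.ext (by rw [h4, c3 hN]))))

lemma odd_dvd_half {m a : ℤ} (hm : ¬ 2 ∣ m) (h : m ∣ 2 * a) : m ∣ a := by
  obtain ⟨k, hk⟩ := h
  rcases Int.even_or_odd k with ⟨k', hk'⟩ | ⟨k', hk'⟩
  · refine ⟨k', mul_left_cancel₀ (two_ne_zero) ?_⟩
    rw [hk, hk']; ring
  · exfalso
    obtain ⟨p, hp⟩ : ∃ p, m = 2*p + 1 := ⟨(m-1)/2, by omega⟩
    have : 2 * a = 4*(p*k') + 2*p + 2*k' + 1 := by rw [hk, hp, hk']; ring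
    omega

lemma odd_factor {m t : ℤ} (hm : ¬ 2 ∣ m) (h : 2 ∣ m * t) : 2 ∣ t := by
  rcases Int.even_or_odd t with he | ⟨k', hk'⟩
  · exact he.two_dvd
  · exfalso
    obtain ⟨p, hp⟩ : ∃ p, m = 2*p + 1 := ⟨(m-1)/2, by omega⟩
    obtain ⟨r, hr⟩ := h
    have : 2 * r = 4*(p*k') + 2*p + 2*k' + 1 := by rw [← hr, hp, hk']; ring
    omega

lemma adjust (hN : 3 ≤ N) {w : Fin (N+2) → ℤ} (hw : 2 ∣ tS w) {x : Fin (N+2) → ℤ} {c : ℤ}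
    (hx : 2 ∣ tS x) (h : IB w w ∣ (IB w x - c)) :
    ∃ x', 2 ∣ tS x' ∧ IB w x' = c := by
  obtain ⟨k, hk⟩ := h
  refine ⟨fun i => x i + (-k) * w i, ?_, ?_⟩
  · rw [tS_add, tS_smul]
    obtain ⟨a, ha⟩ := hw; obtain ⟨b, hb⟩ := hx
    exact ⟨b + -k * a, by rw [ha, hb]; ring⟩
  · rw [IB_add_right, IB_smul_right]
    linarith [hk, mul_comm k (IB w w)]

end SA


/-- Classification of reflective vectors of a decorated `D`-lattice `(Λ_N, ξ)`:
if `v ∈ Λ_N` is primitive of negative square and the reflection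
`ρ_v(x) = x - (2(x,v)/v²)·v` preserves `Λ_N` and fixes the decoration `ξ` (i.e.
`ρ_v ∈ Γ_ξ`; note that `ρ_v ∈ O⁺` is automatic since `v² < 0`), then `v` is nodal
(`v² = -2`, `div(v) = 1`), or hyperelliptic (`v² = -4`, `div(v) = 2`, `v* = ξ`), or
`N ≡ 3 (mod 8)` and `v` is unigonal with `v² = -4`, `div(v) = 4`, or `N ≡ 4 (mod 8)`
and `v` is unigonal with `v² = -2`, `div(v) = 2`. -/
theorem statement8 (N : ℕ) (hN : 3 ≤ N)
    (ξv : Fin (N + 2) → ℚ) (hξ : IsDeco N ξv)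
    (v : Fin (N + 2) → ℚ) (hv : v ∈ LamSet N)
    (hprim : ∀ (m : ℤ) (y : Fin (N + 2) → ℚ), y ∈ LamSet N → (m : ℚ) • y = v →
      m = 1 ∨ m = -1)
    (hneg : LamForm N v v < 0)
    (hrefL : ∀ x ∈ LamSet N, x - (2 * LamForm N x v / LamForm N v v) • v ∈ LamSet N)
    (hrefξ : (ξv - (2 * LamForm N ξv v / LamForm N v v) • v) - ξv ∈ LamSet N) :
    (LamForm N v v = -2 ∧ ∃ x ∈ LamSet N, LamForm N v x = 1) ∨
    (LamForm N v v = -4 ∧ HasDiv N v 2 ∧ (1/2 : ℚ) • v - ξv ∈ LamSet N) ∨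
    (N % 8 = 3 ∧ LamForm N v v = -4 ∧ HasDiv N v 4) ∨
    (N % 8 = 4 ∧ LamForm N v v = -2 ∧ HasDiv N v 2) := by
  classical
  obtain ⟨w, hvw, hσ⟩ := SA.int_of_mem hv
  set s : ℤ := SA.IB w w with hsdef
  have hsval : LamForm N v v = (s : ℚ) := SA.lamform_cast v v w w hvw hvw
  have hsneg : s < 0 := by
    have : ((s:ℤ):ℚ) < 0 := hsval ▸ hneg
    exact_mod_cast this
  have hw0 : ∃ i, w i ≠ 0 := by
    by_contra h
    push_neg at h
    have hz : s = 0 := by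
      rw [hsdef, SA.IB_eq]
      simp [h, SA.tS]
    omega
  have prim' : ∀ (m : ℤ) (y : Fin (N+2) → ℤ), 2 ∣ SA.tS y →
      (∀ i, m * y i = w i) → m = 1 ∨ m = -1 := by
    intro m y hyt hey
    apply hprim m (fun i => ((y i : ℤ):ℚ)) (SA.mem_of_int (fun _ => rfl) hyt)
    funext i
    rw [Pi.smul_apply, smul_eq_mul, hvw i]
    exact_mod_cast hey i
  have H1 : ∀ y : Fin (N+2) → ℤ, 2 ∣ SA.tS y → s ∣ 2 * SA.IB w y := by
    intro y hyt
    set x : Fin (N+2) → ℚ := fun i => ((y i : ℤ):ℚ) with hxdef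
    have hxmem : x ∈ LamSet N := SA.mem_of_int (fun _ => rfl) hyt
    have href : x - (2 * LamForm N x v / LamForm N v v) • v ∈ LamSet N := hrefL x hxmem
    set q : ℚ := 2 * LamForm N x v / LamForm N v v with hqdef
    have hmem2 : (fun i => q * v i) ∈ LamSet N := by
      have hx2 : (fun i => q * v i) = x - (x - q • v) := by
        funext i
        simp only [Pi.sub_apply, Pi.smul_apply, smul_eq_mul]
        ring
      rw [hx2]
      exact SA.lamset_sub hxmem href
    obtain ⟨k, hk⟩ := SA.rat_int_of_smul_mem hvw hv hw0 hprim hmem2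
    have hsne : LamForm N v v ≠ 0 := ne_of_lt hneg
    have heq : 2 * LamForm N x v = q * LamForm N v v := by
      rw [hqdef, div_mul_cancel₀ _ hsne]
    rw [hk, hsval, SA.lamform_cast x v y w (fun _ => rfl) hvw] at heq
    have heqz : 2 * SA.IB y w = k * s := by exact_mod_cast heq
    exact ⟨k, by rw [SA.IB_symm w y]; linarith⟩
  have hs2 : 2 ∣ s := by
    have e1 : s = 2*(w 0 * w 1 + w 2 * w 3) - SA.tS (fun i => w i * w i) := by
      rw [hsdef, SA.IB_eq]; ring
    obtain ⟨k, hk⟩ := SA.tS_sq_parity w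
    obtain ⟨a, ha⟩ := hσ
    exact ⟨(w 0 * w 1 + w 2 * w 3) - k - a, by omega⟩
  obtain ⟨n, hn, hnpos⟩ : ∃ n:ℤ, s = -(2*n) ∧ 0 < n := ⟨-(s/2), by omega, by omega⟩
  have nDvdIB : ∀ y : Fin (N+2) → ℤ, 2 ∣ SA.tS y → n ∣ SA.IB w y := by
    intro y hy
    obtain ⟨k, hk⟩ := H1 y hy
    refine ⟨-k, mul_left_cancel₀ (two_ne_zero) ?_⟩
    rw [hk, hn]; ring
  -- head divisibility by n
  have hhead0 : n ∣ w 0 := by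
    have := nDvdIB (SA.ee 1) (by rw [SA.tS_ee, SA.c1]; norm_num)
    rwa [SA.IB_ee1 hN] at this
  have hhead1 : n ∣ w 1 := by
    have := nDvdIB (SA.ee 0) (by rw [SA.tS_ee, SA.c0]; norm_num)
    rwa [SA.IB_ee0 hN] at this
  have hhead2 : n ∣ w 2 := by
    have := nDvdIB (SA.ee 3) (by rw [SA.tS_ee, SA.c3 hN]; norm_num)
    rwa [SA.IB_ee3 hN] at this
  have hhead3 : n ∣ w 3 := by
    have := nDvdIB (SA.ee 2) (by rw [SA.tS_ee, SA.c2 hN]; norm_num)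
    rwa [SA.IB_ee2 hN] at this
  have htail2 : ∀ i : Fin (N+2), 4 ≤ (i:ℕ) → n ∣ 2 * w i := by
    intro i h4
    have hm := nDvdIB (fun j => SA.ee i j + SA.ee i j)
      (by rw [SA.tS_add, SA.tS_ee]; simp [h4])
    rw [SA.IB_add_right, SA.IB_ee_tail hN w h4] at hm
    obtain ⟨k, hk⟩ := hm
    refine ⟨-k, ?_⟩
    rw [mul_neg, ← hk]; ring
  have hpairn : ∀ i j : Fin (N+2), 4 ≤ (i:ℕ) → 4 ≤ (j:ℕ) → n ∣ w i + w j := by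
    intro i j h4i h4j
    by_cases hij : i = j
    · subst hij
      obtain ⟨k, hk⟩ := htail2 i h4i
      refine ⟨k, ?_⟩
      rw [← hk]; ring
    · have hm := nDvdIB (fun t => SA.ee i t + SA.ee j t)
        (by rw [SA.tS_add, SA.tS_ee, SA.tS_ee]; simp [h4i, h4j])
      rw [SA.IB_add_right, SA.IB_ee_tail hN w h4i, SA.IB_ee_tail hN w h4j] at hm
      obtain ⟨k, hk⟩ := hm
      refine ⟨-k, ?_⟩
      rw [mul_neg, ← hk]; ring
  by_cases hodd : ∃ y : Fin (N+2) → ℤ, 2 ∣ SA.tS y ∧ ¬ 2 ∣ SA.IB w y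
  · -- nodal case
    obtain ⟨y, hyt, hyo⟩ := hodd
    have hnodd : ¬ 2 ∣ n := fun h2n => hyo (dvd_trans h2n (nDvdIB y hyt))
    have hall_i : ∀ i, n ∣ w i := by
      intro i
      by_cases h4 : 4 ≤ (i:ℕ)
      · exact SA.odd_dvd_half hnodd (htail2 i h4)
      · rcases SA.head_cases hN i h4 with h | h | h | h <;> subst h
        · exact hhead0
        · exact hhead1
        · exact hhead2
        · exact hhead3
    choose u hu using fun i => hall_i i
    have htu : 2 ∣ SA.tS u := by
      have h1 : SA.tS w = n * SA.tS u := by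
        rw [SA.tS_congr (g := fun i => n * u i) (fun i _ => hu i), SA.tS_smul]
      exact SA.odd_factor hnodd (h1 ▸ hσ)
    have hn1 : n = 1 := by
      rcases prim' n u htu (fun i => (hu i).symm) with h | h
      · exact h
      · omega
    have hsm2 : s = -2 := by omega
    left
    constructor
    · rw [hsval, hsm2]; norm_num
    · obtain ⟨x', hx't, hx'v⟩ := SA.adjust hN hσ hyt (c := 1)
        (by rw [← hsdef, hsm2, show ((-2:ℤ)) = -(2) from rfl, neg_dvd]
            have : ¬ 2 ∣ SA.IB w y := hyo
            omega)
      refine ⟨fun i => ((x' i : ℤ):ℚ), SA.mem_of_int (fun _ => rfl) hx't, ?_⟩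
      rw [SA.lamform_cast v _ w x' hvw (fun _ => rfl), hx'v]
      norm_num
  · -- all pairings even
    push_neg at hodd
    have hall : ∀ y : Fin (N+2) → ℤ, 2 ∣ SA.tS y → 2 ∣ SA.IB w y := hodd
    have hh0 : 2 ∣ w 0 := by
      have := hall (SA.ee 1) (by rw [SA.tS_ee, SA.c1]; norm_num)
      rwa [SA.IB_ee1 hN] at this
    have hh1 : 2 ∣ w 1 := by
      have := hall (SA.ee 0) (by rw [SA.tS_ee, SA.c0]; norm_num)
      rwa [SA.IB_ee0 hN] at this
    have hh2 : 2 ∣ w 2 := by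
      have := hall (SA.ee 3) (by rw [SA.tS_ee, SA.c3 hN]; norm_num)
      rwa [SA.IB_ee3 hN] at this
    have hh3 : 2 ∣ w 3 := by
      have := hall (SA.ee 2) (by rw [SA.tS_ee, SA.c2 hN]; norm_num)
      rwa [SA.IB_ee2 hN] at this
    have hheadev : ∀ i : Fin (N+2), ¬ 4 ≤ (i:ℕ) → 2 ∣ w i := by
      intro i h4
      rcases SA.head_cases hN i h4 with h | h | h | h <;> subst h
      · exact hh0
      · exact hh1
      · exact hh2
      · exact hh3
    have hpair2 : ∀ i j : Fin (N+2), 4 ≤ (i:ℕ) → 4 ≤ (j:ℕ) → 2 ∣ w i + w j := by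
      intro i j h4i h4j
      by_cases hij : i = j
      · subst hij; exact ⟨w i, by ring⟩
      · have hm := hall (fun u => SA.ee i u + SA.ee j u)
          (by rw [SA.tS_add, SA.tS_ee, SA.tS_ee]; simp [h4i, h4j])
        rw [SA.IB_add_right, SA.IB_ee_tail hN w h4i, SA.IB_ee_tail hN w h4j] at hm
        omega
    by_cases hnodd : 2 ∣ n
    · -- n even : n = 2m
      obtain ⟨m, hm⟩ := hnodd
      have hm0 : 0 < m := by omega
      have hmdvd : ∀ i, m ∣ w i := by
        intro i
        by_cases h4 : 4 ≤ (i:ℕ)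
        · obtain ⟨k, hk⟩ := htail2 i h4
          refine ⟨k, mul_left_cancel₀ (two_ne_zero) ?_⟩
          rw [hk, hm]; ring
        · have hnw : n ∣ w i := by
            rcases SA.head_cases hN i h4 with h | h | h | h <;> subst h
            · exact hhead0
            · exact hhead1
            · exact hhead2
            · exact hhead3
          exact dvd_trans ⟨2, by omega⟩ hnw
      choose t ht using hmdvd
      have hmB : m * SA.IB t t = -4 := by
        have h1 : s = m * (m * SA.IB t t) := by
          rw [hsdef]
          conv_lhs => rw [show w = fun i => m * t i from funext ht]
          rw [SA.IB_smul_left, SA.IB_smul_right]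
        have h2 : m * (m * SA.IB t t) = m * (-4) := by
          rw [← h1, hn, hm]; ring
        have h3 := mul_left_cancel₀ (by omega : m ≠ 0) h2
        nlinarith [h3]
      have hm4 : m = 1 ∨ m = 2 ∨ m = 4 := by
        have hdvd4 : m ∣ 4 := ⟨-(SA.IB t t), by rw [mul_neg]; omega⟩
        have hle : m ≤ 4 := Int.le_of_dvd (by norm_num) hdvd4
        interval_cases m <;> omega
      rcases hm4 with hm1 | hm2 | hm44
      · -- s = -4: main case
        have hsm4 : s = -4 := by omega
        -- ξ data extraction
        obtain ⟨hξint, aξ, hξsq⟩ := hξ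
        have hb1 : ∃ b : ℤ, ξv 1 = (b:ℚ) := by
          obtain ⟨a, ha⟩ := hξint (fun i => ((SA.ee (0:Fin (N+2)) i : ℤ):ℚ))
            (SA.mem_of_int (fun _ => rfl) (by rw [SA.tS_ee, SA.c0]; norm_num))
          exact ⟨a, by rw [← SA.lamform_eeq0 hN ξv]; exact ha⟩
        have hb0 : ∃ b : ℤ, ξv 0 = (b:ℚ) := by
          obtain ⟨a, ha⟩ := hξint (fun i => ((SA.ee (1:Fin (N+2)) i : ℤ):ℚ))
            (SA.mem_of_int (fun _ => rfl) (by rw [SA.tS_ee, SA.c1]; norm_num))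
          exact ⟨a, by rw [← SA.lamform_eeq1 hN ξv]; exact ha⟩
        have hb3 : ∃ b : ℤ, ξv 3 = (b:ℚ) := by
          obtain ⟨a, ha⟩ := hξint (fun i => ((SA.ee (2:Fin (N+2)) i : ℤ):ℚ))
            (SA.mem_of_int (fun _ => rfl) (by rw [SA.tS_ee, SA.c2 hN]; norm_num))
          exact ⟨a, by rw [← SA.lamform_eeq2 hN ξv]; exact ha⟩
        have hb2 : ∃ b : ℤ, ξv 2 = (b:ℚ) := by
          obtain ⟨a, ha⟩ := hξint (fun i => ((SA.ee (3:Fin (N+2)) i : ℤ):ℚ))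
            (SA.mem_of_int (fun _ => rfl) (by rw [SA.tS_ee, SA.c3 hN]; norm_num))
          exact ⟨a, by rw [← SA.lamform_eeq3 hN ξv]; exact ha⟩
        have hoall : ∀ i : Fin (N+2), ∃ oo : ℤ, 2 * ξv i = (oo:ℚ) := by
          intro i
          by_cases h4 : 4 ≤ (i:ℕ)
          · obtain ⟨a, ha⟩ := hξint (fun j => ((SA.ee i j + SA.ee i j : ℤ):ℚ))
              (SA.mem_of_int (fun _ => rfl) (by rw [SA.tS_add, SA.tS_ee]; simp [h4]))
            refine ⟨-a, ?_⟩
            rw [show (fun j => ((SA.ee i j + SA.ee i j : ℤ):ℚ))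
                = fun j => ((SA.ee i j:ℤ):ℚ) + ((SA.ee i j:ℤ):ℚ) from
                funext fun j => by push_cast; ring,
              SA.lamform_add_right, SA.lamform_eeq_tail hN ξv h4] at ha
            push_cast
            linarith [ha]
          · rcases SA.head_cases hN i h4 with h | h | h | h <;> subst h
            · obtain ⟨b, hb⟩ := hb0
              exact ⟨2*b, by rw [hb]; push_cast; ring⟩
            · obtain ⟨b, hb⟩ := hb1
              exact ⟨2*b, by rw [hb]; push_cast; ring⟩
            · obtain ⟨b, hb⟩ := hb2
              exact ⟨2*b, by rw [hb]; push_cast; ring⟩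
            · obtain ⟨b, hb⟩ := hb3
              exact ⟨2*b, by rw [hb]; push_cast; ring⟩
        choose o ho using hoall
        have hohead : ∀ i : Fin (N+2), ¬ 4 ≤ (i:ℕ) → 2 ∣ o i := by
          intro i h4
          have hbx : ∃ b : ℤ, ξv i = (b:ℚ) := by
            rcases SA.head_cases hN i h4 with h | h | h | h <;> subst h
            · exact hb0
            · exact hb1
            · exact hb2
            · exact hb3
          obtain ⟨b, hb⟩ := hbx
          refine ⟨b, ?_⟩
          have h := ho i
          rw [hb] at h
          exact_mod_cast h.symm
        have hopair : ∀ i j : Fin (N+2), 4 ≤ (i:ℕ) → 4 ≤ (j:ℕ) → 2 ∣ o i + o j := by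
          intro i j h4i h4j
          by_cases hij : i = j
          · subst hij; exact ⟨o i, by ring⟩
          · obtain ⟨a, ha⟩ := hξint (fun u => ((SA.ee i u + SA.ee j u : ℤ):ℚ))
              (SA.mem_of_int (fun _ => rfl) (by rw [SA.tS_add, SA.tS_ee, SA.tS_ee]; simp [h4i, h4j]))
            rw [show (fun u => ((SA.ee i u + SA.ee j u : ℤ):ℚ))
                = fun u => ((SA.ee i u:ℤ):ℚ) + ((SA.ee j u:ℤ):ℚ) from
                funext fun u => by push_cast; ring,
              SA.lamform_add_right, SA.lamform_eeq_tail hN ξv h4i,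
              SA.lamform_eeq_tail hN ξv h4j] at ha
            refine ⟨-a, ?_⟩
            have hoi := ho i
            have hoj := ho j
            have : ((o i + o j : ℤ):ℚ) = ((2 * -a : ℤ):ℚ) := by
              push_cast
              linarith [ha, hoi, hoj]
            exact_mod_cast this
        have hoo : SA.IB o o = 4 + 8 * aξ := by
          have h1 : LamForm N (fun i => 2 * ξv i) (fun i => 2 * ξv i) = ((SA.IB o o : ℤ):ℚ) :=
            SA.lamform_cast _ _ o o ho ho
          rw [SA.lamform_smul_left, SA.lamform_smul_right, hξsq] at h1
          have h2 : ((SA.IB o o:ℤ):ℚ) = ((4 + 8*aξ : ℤ):ℚ) := by push_cast; linarith [h1]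
          exact_mod_cast h2
        have hoSw : (4:ℤ) ∣ SA.IB o w := by
          set qx : ℚ := 2 * LamForm N ξv v / LamForm N v v with hqx
          have hmemx : (fun i => qx * v i) ∈ LamSet N := by
            have he : (fun i => qx * v i) = -((ξv - qx • v) - ξv) := by
              funext i
              simp only [Pi.neg_apply, Pi.sub_apply, Pi.smul_apply, smul_eq_mul]
              ring
            rw [he]
            exact SA.lamset_neg hrefξ
          obtain ⟨k, hk⟩ := SA.rat_int_of_smul_mem hvw hv hw0 hprim hmemx
          have hsne : LamForm N v v ≠ 0 := ne_of_lt hneg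
          have heq : 2 * LamForm N ξv v = qx * LamForm N v v := by
            rw [hqx, div_mul_cancel₀ _ hsne]
          have h2 : LamForm N (fun i => 2 * ξv i) v = ((SA.IB o w:ℤ):ℚ) :=
            SA.lamform_cast _ _ o w ho hvw
          rw [SA.lamform_smul_left, heq, hk, hsval, hsm4] at h2
          push_cast at h2
          have h3 : ((SA.IB o w:ℤ):ℚ) = ((-4 * k:ℤ):ℚ) := by push_cast; linarith [h2]
          have hz4 : SA.IB o w = -4 * k := by exact_mod_cast h3
          exact ⟨-k, by omega⟩
        obtain ⟨g0, hg0⟩ := id hh0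
        obtain ⟨g1, hg1⟩ := id hh1
        obtain ⟨g2, hg2⟩ := id hh2
        obtain ⟨g3, hg3⟩ := id hh3
        by_cases hwtall : ∀ i : Fin (N+2), 4 ≤ (i:ℕ) → 2 ∣ w i
        · -- tail of w all even
          have hwev : ∀ i, 2 ∣ w i := by
            intro i
            by_cases h4 : 4 ≤ (i:ℕ)
            · exact hwtall i h4
            · exact hheadev i h4
          choose u hu2 using fun i => hwev i
          have hIBu : SA.IB u u = -1 := by
            have h1 : s = 2 * (2 * SA.IB u u) := by
              rw [hsdef]
              conv_lhs => rw [show w = fun i => 2 * u i from funext hu2]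
              rw [SA.IB_smul_left, SA.IB_smul_right]
            omega
          have hsu : ¬ 2 ∣ SA.tS u := by
            intro h2
            rcases prim' 2 u h2 (fun i => (hu2 i).symm) with h | h <;> omega
          by_cases hP4 : (4 ∣ w 0 ∧ 4 ∣ w 1 ∧ 4 ∣ w 2 ∧ 4 ∣ w 3) ∧
              (∀ i : Fin (N+2), 4 ≤ (i:ℕ) → ¬ (4:ℤ) ∣ w i)
          · -- UNIGONAL
            obtain ⟨⟨h40, h41, h42, h43⟩, h4t⟩ := hP4
            have hut : ∀ i : Fin (N+2), 4 ≤ (i:ℕ) → ¬ 2 ∣ u i := by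
              intro i h4 hdu
              obtain ⟨k, hk⟩ := hdu
              exact h4t i h4 ⟨k, by rw [hu2 i, hk]; ring⟩
            have huh : ∀ i : Fin (N+2), ¬ 4 ≤ (i:ℕ) → 2 ∣ u i := by
              intro i h4
              have h4w : (4:ℤ) ∣ w i := by
                rcases SA.head_cases hN i h4 with h | h | h | h <;> subst h
                · exact h40
                · exact h41
                · exact h42
                · exact h43
              obtain ⟨k, hk⟩ := h4w
              have := hu2 i
              exact ⟨k, by omega⟩
            have hdec : ∀ i : Fin (N+2), ∃ c, u i = 2 * c + SA.chi i := by
              intro i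
              by_cases h4 : 4 ≤ (i:ℕ)
              · have h1 := hut i h4
                refine ⟨(u i - 1)/2, ?_⟩
                have hch : SA.chi i = 1 := by simp [SA.chi, h4]
                omega
              · have h1 := huh i h4
                refine ⟨u i / 2, ?_⟩
                have hch : SA.chi i = 0 := by simp [SA.chi, h4]
                omega
            choose cc hcc using hdec
            have hsexp : SA.IB u u = 4 * SA.IB cc cc + 4 * SA.IB cc (SA.chi (N := N))
                + SA.IB (SA.chi (N := N)) (SA.chi (N := N)) := by
              conv_lhs => rw [show u = fun i => 2 * cc i + SA.chi i from funext hcc]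
              rw [SA.IB_expand (x := fun i => 2 * cc i) (y := SA.chi (N := N))]
              rw [SA.IB_smul_left, SA.IB_smul_right, SA.IB_smul_left]
              ring
            have hτ : SA.IB cc (SA.chi (N := N)) = - SA.tS cc := SA.IB_chi_right hN cc
            have hchi2 : SA.IB (SA.chi : Fin (N+2) → ℤ) SA.chi = -((N:ℤ) - 2) := SA.IB_chi_chi hN
            have hAτ : 2 ∣ SA.IB cc cc - SA.tS cc := by
              rcases Int.even_or_odd (SA.tS cc) with ⟨r, hr⟩ | ⟨r, hr⟩
              · have hA : 2 ∣ SA.IB cc cc := SA.IB_self_even hN ⟨r, by omega⟩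
                omega
              · set i4 : Fin (N+2) := ⟨4, by omega⟩ with hi4
                have h4i4 : 4 ≤ ((i4 : Fin (N+2)):ℕ) := le_refl 4
                have htc' : 2 ∣ SA.tS (fun i => cc i - SA.ee i4 i) := by
                  rw [SA.tS_sub, SA.tS_ee]
                  simp only [h4i4, if_pos]
                  omega
                have hc'even := SA.IB_self_even hN htc'
                have hexp : SA.IB (fun i => cc i - SA.ee i4 i) (fun i => cc i - SA.ee i4 i)
                    = SA.IB cc cc - 2 * SA.IB cc (SA.ee i4) + SA.IB (SA.ee i4) (SA.ee i4) := by
                  rw [show (fun i => cc i - SA.ee i4 i) = fun i => cc i + (-1) * SA.ee i4 i from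
                    funext fun i => by ring]
                  rw [SA.IB_expand]
                  rw [SA.IB_smul_right, SA.IB_smul_left, SA.IB_smul_right]
                  ring
                rw [hexp] at hc'even
                have hIBee : SA.IB (SA.ee i4) (SA.ee i4) = -(SA.ee i4 i4) := SA.IB_ee_tail hN _ h4i4
                have hIBce : SA.IB cc (SA.ee i4) = -(cc i4) := SA.IB_ee_tail hN cc h4i4
                have heei : SA.ee i4 i4 = 1 := SA.ee_self i4
                omega
            have hN8 : N % 8 = 3 := by
              rw [hτ, hchi2, hIBu] at hsexp
              obtain ⟨D, hD⟩ := hAτ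
              omega
            right; right; left
            refine ⟨hN8, by rw [hsval, hsm4]; norm_num, ?_⟩
            unfold HasDiv
            constructor
            · intro x hx
              obtain ⟨y, hy, hyt⟩ := SA.int_of_mem hx
              have hI : SA.IB w y = (w 0 * y 1 + w 1 * y 0 + w 2 * y 3 + w 3 * y 2)
                  - SA.tS (fun i => w i * y i) := SA.IB_eq w y
              obtain ⟨p0, hp0⟩ := h40
              obtain ⟨p1, hp1⟩ := h41
              obtain ⟨p2, hp2⟩ := h42
              obtain ⟨p3, hp3⟩ := h43
              have hH : (4:ℤ) ∣ (w 0 * y 1 + w 1 * y 0 + w 2 * y 3 + w 3 * y 2) :=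
                ⟨p0 * y 1 + p1 * y 0 + p2 * y 3 + p3 * y 2, by rw [hp0, hp1, hp2, hp3]; ring⟩
              have e1 : SA.tS (fun i => w i * y i) = 2 * SA.tS (fun i => u i * y i) := by
                rw [← SA.tS_smul]
                apply SA.tS_congr
                intro i _
                rw [hu2 i]; ring
              have e2 : 2 ∣ SA.tS (fun i => u i * y i) - SA.tS y := by
                rw [← SA.tS_sub]
                apply SA.dvd_tS
                intro i h4
                obtain ⟨p, hp⟩ : ∃ p, u i = 2*p+1 := ⟨(u i - 1)/2, by have := hut i h4; omega⟩
                exact ⟨p * y i, by rw [hp]; ring⟩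
              have h4y : (4:ℤ) ∣ SA.IB w y := by omega
              obtain ⟨k, hk4⟩ := h4y
              refine ⟨k, ?_⟩
              rw [SA.lamform_cast v x w y hvw hy, hk4]
              push_cast
              ring
            · refine ⟨fun i => ((-(w i) : ℤ):ℚ), SA.mem_of_int (fun _ => rfl)
                (by rw [show (fun i => -(w i)) = fun i => -w i from rfl, SA.tS_neg]; omega), ?_⟩
              rw [SA.lamform_cast v _ w (fun i => -(w i)) hvw (fun _ => rfl)]
              rw [show SA.IB w (fun i => -(w i)) = - SA.IB w w from by
                rw [show (fun i => -(w i)) = fun i => -w i from rfl, SA.IB_neg_right]]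
              rw [← hsdef, hsm4]
              norm_num
          · -- HYPER-B
            have hoev : ∀ i : Fin (N+2), 4 ≤ (i:ℕ) → 2 ∣ o i := by
              by_contra hc
              push_neg at hc
              obtain ⟨i1, h4i1, hoi1⟩ := hc
              have hoodd : ∀ i : Fin (N+2), 4 ≤ (i:ℕ) → ¬ 2 ∣ o i := by
                intro i h4 h2
                exact hoi1 (by have := hopair i i1 h4 h4i1; omega)
              have hI : SA.IB o w = (o 0 * w 1 + o 1 * w 0 + o 2 * w 3 + o 3 * w 2)
                  - SA.tS (fun i => o i * w i) := SA.IB_eq o w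
              obtain ⟨p0, hp0⟩ := hohead 0 (by rw [SA.c0]; omega)
              obtain ⟨p1, hp1⟩ := hohead 1 (by rw [SA.c1]; omega)
              obtain ⟨p2, hp2⟩ := hohead 2 (by rw [SA.c2 hN]; omega)
              obtain ⟨p3, hp3⟩ := hohead 3 (by rw [SA.c3 hN]; omega)
              have hH4 : (4:ℤ) ∣ (o 0 * w 1 + o 1 * w 0 + o 2 * w 3 + o 3 * w 2) :=
                ⟨p0 * g1 + p1 * g0 + p2 * g3 + p3 * g2, by
                  rw [hp0, hp1, hp2, hp3, hg0, hg1, hg2, hg3]; ring⟩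
              have e1 : SA.tS (fun i => o i * w i) = 2 * SA.tS (fun i => o i * u i) := by
                rw [← SA.tS_smul]
                apply SA.tS_congr
                intro i _
                rw [hu2 i]; ring
              have e2 : 2 ∣ SA.tS (fun i => o i * u i) - SA.tS u := by
                rw [← SA.tS_sub]
                apply SA.dvd_tS
                intro i h4
                obtain ⟨p, hp⟩ : ∃ p, o i = 2*p+1 := ⟨(o i - 1)/2, by have := hoodd i h4; omega⟩
                exact ⟨p * u i, by rw [hp]; ring⟩
              omega
            have hoevall : ∀ i, 2 ∣ o i := by
              intro i
              by_cases h4 : 4 ≤ (i:ℕ)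
              · exact hoev i h4
              · exact hohead i h4
            choose z hz using fun i => hoevall i
            have he : SA.IB o o = 2 * (2 * SA.IB z z) := by
              conv_lhs => rw [show o = fun i => 2 * z i from funext hz]
              rw [SA.IB_smul_left, SA.IB_smul_right]
            have hzz : SA.IB z z = 1 + 2 * aξ := by omega
            have hIBzpar : 2 ∣ SA.IB z z - SA.tS z := by
              have e1 : SA.IB z z = 2*(z 0 * z 1 + z 2 * z 3) - SA.tS (fun i => z i * z i) := by
                rw [SA.IB_eq]; ring
              obtain ⟨k, hk⟩ := SA.tS_sq_parity z
              exact ⟨(z 0 * z 1 + z 2 * z 3) - k - SA.tS z, by omega⟩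
            have hztodd : ¬ 2 ∣ SA.tS z := by omega
            have hro : ∀ i, 2 ∣ w i - o i := by
              intro i
              have h1 := hwev i
              have h2 := hoevall i
              omega
            choose r hr using hro
            have hrt : 2 ∣ SA.tS r := by
              have e1 : SA.tS (fun i => w i - o i) = 2 * SA.tS r := by
                rw [SA.tS_congr (g := fun i => 2 * r i) (fun i _ => hr i), SA.tS_smul]
              rw [SA.tS_sub] at e1
              have e2 : SA.tS w = 2 * SA.tS u := by
                rw [SA.tS_congr (g := fun i => 2 * u i) (fun i _ => hu2 i), SA.tS_smul]
              have e3 : SA.tS o = 2 * SA.tS z := by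
                rw [SA.tS_congr (g := fun i => 2 * z i) (fun i _ => hz i), SA.tS_smul]
              omega
            right; left
            refine ⟨by rw [hsval, hsm4]; norm_num, ?_, ?_⟩
            · unfold HasDiv
              constructor
              · intro x hx
                obtain ⟨y, hy, hyt⟩ := SA.int_of_mem hx
                obtain ⟨k, hk⟩ := hall y hyt
                refine ⟨k, ?_⟩
                rw [SA.lamform_cast v x w y hvw hy, hk]
                push_cast
                ring
              · -- attained 2
                have hx0 : ∃ x0 : Fin (N+2) → ℤ, 2 ∣ SA.tS x0 ∧ (4:ℤ) ∣ SA.IB w x0 - 2 := by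
                  rw [not_and_or] at hP4
                  rcases hP4 with hheads | htails
                  · rw [not_and_or, not_and_or, not_and_or] at hheads
                    have hcase : (¬ (4:ℤ) ∣ w 0) ∨ (¬ (4:ℤ) ∣ w 1) ∨ (¬ (4:ℤ) ∣ w 2) ∨ (¬ (4:ℤ) ∣ w 3) := by
                      tauto
                    rcases hcase with hx | hx | hx | hx
                    · refine ⟨SA.ee 1, by rw [SA.tS_ee, SA.c1]; norm_num, ?_⟩
                      rw [SA.IB_ee1 hN]
                      obtain ⟨a, ha⟩ := hh0
                      omega
                    · refine ⟨SA.ee 0, by rw [SA.tS_ee, SA.c0]; norm_num, ?_⟩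
                      rw [SA.IB_ee0 hN]
                      obtain ⟨a, ha⟩ := hh1
                      omega
                    · refine ⟨SA.ee 3, by rw [SA.tS_ee, SA.c3 hN]; norm_num, ?_⟩
                      rw [SA.IB_ee3 hN]
                      obtain ⟨a, ha⟩ := hh2
                      omega
                    · refine ⟨SA.ee 2, by rw [SA.tS_ee, SA.c2 hN]; norm_num, ?_⟩
                      rw [SA.IB_ee2 hN]
                      obtain ⟨a, ha⟩ := hh3
                      omega
                  · push_neg at htails
                    obtain ⟨i1, h4i1, h4wi1⟩ := htails
                    have hj1 : ∃ j1 : Fin (N+2), 4 ≤ (j1:ℕ) ∧ ¬ (4:ℤ) ∣ w j1 := by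
                      by_contra hcj
                      push_neg at hcj
                      have : 2 ∣ SA.tS u := by
                        apply SA.dvd_tS
                        intro i h4
                        obtain ⟨k, hk⟩ := hcj i h4
                        have := hu2 i
                        exact ⟨k, by omega⟩
                      exact hsu this
                    obtain ⟨j1, h4j1, hoj1⟩ := hj1
                    have hij : i1 ≠ j1 := by
                      intro hcontra
                      rw [hcontra] at h4wi1
                      exact hoj1 h4wi1
                    refine ⟨fun t => SA.ee i1 t + SA.ee j1 t,
                      by rw [SA.tS_add, SA.tS_ee, SA.tS_ee]; simp [h4i1, h4j1], ?_⟩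
                    rw [SA.IB_add_right, SA.IB_ee_tail hN w h4i1, SA.IB_ee_tail hN w h4j1]
                    obtain ⟨a, ha⟩ := h4wi1
                    have hwj1ev := hwtall j1 h4j1
                    omega
                obtain ⟨x0, hx0t, hx0d⟩ := hx0
                obtain ⟨x', hx't, hx'v⟩ := SA.adjust hN hσ hx0t (c := 2)
                  (by rw [← hsdef, hsm4, show ((-4:ℤ)) = -(4) from rfl, neg_dvd]; omega)
                refine ⟨fun i => ((x' i : ℤ):ℚ), SA.mem_of_int (fun _ => rfl) hx't, ?_⟩
                rw [SA.lamform_cast v _ w x' hvw (fun _ => rfl), hx'v]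
                all_goals norm_num
            · -- (1/2) v - ξ ∈ LamSet
              apply SA.mem_of_int (y := r) _ hrt
              intro i
              have h1 : ((1/2 : ℚ) • v - ξv) i = (1/2) * v i - ξv i := rfl
              rw [h1, hvw i]
              have h2 : ((w i - o i : ℤ):ℚ) = ((2 * r i : ℤ):ℚ) :=
                congrArg (fun z : ℤ => (z:ℚ)) (hr i)
              have h3 := ho i
              push_cast at h2 ⊢
              linarith [h2, h3]
        · -- HYPER-A : tail of w all odd
          push_neg at hwtall
          obtain ⟨i0, h4i0, hoi0⟩ := hwtall
          have htodd : ∀ i : Fin (N+2), 4 ≤ (i:ℕ) → ¬ 2 ∣ w i := by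
            intro i h4 h2
            exact hoi0 (by have := hpair2 i i0 h4 h4i0; omega)
          have hmod8 := SA.tS_sq_mod8 hN htodd
          have hBeq : s = 2*(w 0 * w 1 + w 2 * w 3) - SA.tS (fun i => w i * w i) := by
            rw [hsdef, SA.IB_eq]; ring
          have hprodeq : w 0 * w 1 + w 2 * w 3 = 4*(g0*g1) + 4*(g2*g3) := by
            rw [hg0, hg1, hg2, hg3]; ring
          have hN24 : (8:ℤ) ∣ ((N:ℤ) - 2) - 4 := by omega
          have hoodd : ∀ i : Fin (N+2), 4 ≤ (i:ℕ) → ¬ 2 ∣ o i := by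
            intro i h4 h2
            have hoevt : ∀ j : Fin (N+2), 4 ≤ (j:ℕ) → 2 ∣ o j := by
              intro j h4j
              have := hopair j i h4j h4
              omega
            have hoevall : ∀ j, 2 ∣ o j := by
              intro j
              by_cases h4j : 4 ≤ (j:ℕ)
              · exact hoevt j h4j
              · exact hohead j h4j
            choose z hz using hoevall
            have he : SA.IB o o = 2 * (2 * SA.IB z z) := by
              conv_lhs => rw [show o = fun i => 2 * z i from funext hz]
              rw [SA.IB_smul_left, SA.IB_smul_right]
            have hzz : SA.IB z z = 1 + 2 * aξ := by omega
            have hIBzpar : 2 ∣ SA.IB z z - SA.tS z := by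
              have e1 : SA.IB z z = 2*(z 0 * z 1 + z 2 * z 3) - SA.tS (fun i => z i * z i) := by
                rw [SA.IB_eq]; ring
              obtain ⟨k, hk⟩ := SA.tS_sq_parity z
              exact ⟨(z 0 * z 1 + z 2 * z 3) - k - SA.tS z, by omega⟩
            have hztodd : ¬ 2 ∣ SA.tS z := by omega
            have hzw : SA.IB o w = 2 * SA.IB z w := by
              conv_lhs => rw [show o = fun i => 2 * z i from funext hz]
              rw [SA.IB_smul_left]
            have e2 : SA.IB z w = (z 0 * w 1 + z 1 * w 0 + z 2 * w 3 + z 3 * w 2)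
                - SA.tS (fun i => z i * w i) := SA.IB_eq z w
            have hHpar : 2 ∣ z 0 * w 1 + z 1 * w 0 + z 2 * w 3 + z 3 * w 2 :=
              ⟨z 0 * g1 + z 1 * g0 + z 2 * g3 + z 3 * g2, by
                rw [hg0, hg1, hg2, hg3]; ring⟩
            have hts_par : 2 ∣ SA.tS (fun i => z i * w i) - SA.tS z := by
              rw [← SA.tS_sub]
              apply SA.dvd_tS
              intro j h4j
              obtain ⟨p, hp⟩ : ∃ p, w j = 2*p+1 := ⟨(w j - 1)/2, by have := htodd j h4j; omega⟩
              exact ⟨z j * p, by rw [hp]; ring⟩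
            omega
          have hro : ∀ i, 2 ∣ w i - o i := by
            intro i
            by_cases h4 : 4 ≤ (i:ℕ)
            · have h1 := htodd i h4
              have h2 := hoodd i h4
              omega
            · have h1 := hheadev i h4
              have h2 := hohead i h4
              omega
          choose r hr using hro
          have hI : SA.IB o w = (o 0 * w 1 + o 1 * w 0 + o 2 * w 3 + o 3 * w 2)
              - SA.tS (fun i => o i * w i) := SA.IB_eq o w
          obtain ⟨p0, hp0⟩ := hohead 0 (by rw [SA.c0]; omega)
          obtain ⟨p1, hp1⟩ := hohead 1 (by rw [SA.c1]; omega)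
          obtain ⟨p2, hp2⟩ := hohead 2 (by rw [SA.c2 hN]; omega)
          obtain ⟨p3, hp3⟩ := hohead 3 (by rw [SA.c3 hN]; omega)
          have hH4 : (4:ℤ) ∣ (o 0 * w 1 + o 1 * w 0 + o 2 * w 3 + o 3 * w 2) :=
            ⟨p0 * g1 + p1 * g0 + p2 * g3 + p3 * g2, by
              rw [hp0, hp1, hp2, hp3, hg0, hg1, hg2, hg3]; ring⟩
          have hcong : (4:ℤ) ∣ SA.tS (fun i => o i * w i)
              - (SA.tS o + SA.tS w - ((N:ℤ) - 2)) := by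
            have key : SA.tS (fun i => o i * w i - o i - w i + 1)
                = SA.tS (fun i => o i * w i) - SA.tS o - SA.tS w
                  + SA.tS (fun _ : Fin (N+2) => (1:ℤ)) := by
              rw [show (fun i => o i * w i - o i - w i + 1)
                  = fun i => (o i * w i - o i) - (w i - 1) from funext fun i => by ring,
                SA.tS_sub, SA.tS_sub, SA.tS_sub]
              ring
            have hdvd : (4:ℤ) ∣ SA.tS (fun i => o i * w i - o i - w i + 1) := by
              apply SA.dvd_tS
              intro i h4
              obtain ⟨p, hp⟩ : ∃ p, o i = 2*p+1 := ⟨(o i - 1)/2, by have := hoodd i h4; omega⟩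
              obtain ⟨q, hq⟩ : ∃ q, w i = 2*q+1 := ⟨(w i - 1)/2, by have := htodd i h4; omega⟩
              exact ⟨p * q, by rw [hp, hq]; ring⟩
            rw [key] at hdvd
            rw [SA.tS_one hN] at hdvd
            omega
          have hOpar : 2 ∣ SA.tS o - ((N:ℤ)-2) := by
            rw [← SA.tS_one hN, ← SA.tS_sub]
            apply SA.dvd_tS
            intro i h4
            have := hoodd i h4
            omega
          have h4wo : (4:ℤ) ∣ SA.tS w - SA.tS o := by omega
          have hrt : 2 ∣ SA.tS r := by
            have e1 : SA.tS (fun i => w i - o i) = 2 * SA.tS r := by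
              rw [SA.tS_congr (g := fun i => 2 * r i) (fun i _ => hr i), SA.tS_smul]
            rw [SA.tS_sub] at e1
            omega
          right; left
          refine ⟨by rw [hsval, hsm4]; norm_num, ?_, ?_⟩
          · unfold HasDiv
            constructor
            · intro x hx
              obtain ⟨y, hy, hyt⟩ := SA.int_of_mem hx
              obtain ⟨k, hk⟩ := hall y hyt
              refine ⟨k, ?_⟩
              rw [SA.lamform_cast v x w y hvw hy, hk]
              push_cast
              ring
            · have hIBx : SA.IB w (fun j => SA.ee i0 j + SA.ee i0 j) = -(w i0) + -(w i0) := by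
                rw [SA.IB_add_right, SA.IB_ee_tail hN w h4i0]
              obtain ⟨x', hx't, hx'v⟩ := SA.adjust hN hσ
                (x := fun j => SA.ee i0 j + SA.ee i0 j) (c := 2)
                (by rw [SA.tS_add, SA.tS_ee]; simp [h4i0])
                (by rw [← hsdef, hsm4, hIBx, show ((-4:ℤ)) = -(4) from rfl, neg_dvd]
                    have := htodd i0 h4i0
                    omega)
              refine ⟨fun i => ((x' i : ℤ):ℚ), SA.mem_of_int (fun _ => rfl) hx't, ?_⟩
              rw [SA.lamform_cast v _ w x' hvw (fun _ => rfl), hx'v]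
              all_goals norm_num
          · apply SA.mem_of_int (y := r) _ hrt
            intro i
            have h1 : ((1/2 : ℚ) • v - ξv) i = (1/2) * v i - ξv i := rfl
            rw [h1, hvw i]
            have h2 : ((w i - o i : ℤ):ℚ) = ((2 * r i : ℤ):ℚ) :=
              congrArg (fun z : ℤ => (z:ℚ)) (hr i)
            have h3 := ho i
            push_cast at h2 ⊢
            linarith [h2, h3]
      · -- m = 2 : impossible
        exfalso
        subst hm2
        have hn4 : n = 4 := by omega
        have hth : ∀ i : Fin (N+2), ¬ 4 ≤ (i:ℕ) → 2 ∣ t i := by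
          intro i h4
          have hnw : n ∣ w i := by
            rcases SA.head_cases hN i h4 with h | h | h | h <;> subst h
            · exact hhead0
            · exact hhead1
            · exact hhead2
            · exact hhead3
          obtain ⟨k, hk⟩ := hnw
          rw [hn4] at hk
          have hwt := ht i
          exact ⟨k, by omega⟩
        have hptail : ∀ i j : Fin (N+2), 4 ≤ (i:ℕ) → 4 ≤ (j:ℕ) → 2 ∣ t i + t j := by
          intro i j h4i h4j
          obtain ⟨k, hk⟩ := hpairn i j h4i h4j
          rw [hn4] at hk
          have h1 := ht i
          have h2 := ht j
          exact ⟨k, by omega⟩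
        by_cases htall : ∀ i : Fin (N+2), 4 ≤ (i:ℕ) → 2 ∣ t i
        · have h2t : 2 ∣ SA.tS t := SA.dvd_tS htall
          rcases prim' 2 t h2t (fun i => (ht i).symm) with h | h <;> omega
        · push_neg at htall
          obtain ⟨j0, h4j0, hoj0⟩ := htall
          have htodd : ∀ i : Fin (N+2), 4 ≤ (i:ℕ) → ¬ 2 ∣ t i := by
            intro i h4 h2
            exact hoj0 (by have := hptail i j0 h4 h4j0; omega)
          have hmod8 := SA.tS_sq_mod8 hN htodd
          have hBt2 : SA.IB t t = -2 := by omega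
          have hBeq : SA.IB t t = 2*(t 0 * t 1 + t 2 * t 3) - SA.tS (fun i => t i * t i) := by
            rw [SA.IB_eq]; ring
          obtain ⟨a0, ha0⟩ := hth 0 (by rw [SA.c0]; omega)
          obtain ⟨a1, ha1⟩ := hth 1 (by rw [SA.c1]; omega)
          obtain ⟨a2, ha2⟩ := hth 2 (by rw [SA.c2 hN]; omega)
          obtain ⟨a3, ha3⟩ := hth 3 (by rw [SA.c3 hN]; omega)
          have hprodeq : t 0 * t 1 + t 2 * t 3 = 4 * (a0*a1) + 4*(a2*a3) := by
            rw [ha0, ha1, ha2, ha3]; ring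
          have hpar : 2 ∣ SA.tS t - ((N:ℤ) - 2) := by
            rw [← SA.tS_one hN, ← SA.tS_sub]
            exact SA.dvd_tS (fun i h4 => by have := htodd i h4; omega)
          have h2t : 2 ∣ SA.tS t := by omega
          rcases prim' 2 t h2t (fun i => (ht i).symm) with h | h <;> omega
      · -- m = 4 : impossible
        exfalso
        subst hm44
        have h2t : 2 ∣ SA.tS (fun i => 2 * t i) := by
          rw [SA.tS_smul]; exact ⟨SA.tS t, rfl⟩
        rcases prim' 2 (fun i => 2 * t i) h2t (fun i => by rw [ht i]; ring) with h | h <;> omega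
    · -- n odd ⇒ n = 1, s = -2, N ≡ 4 (mod 8) case
      have hall_i : ∀ i, n ∣ w i := by
        intro i
        by_cases h4 : 4 ≤ (i:ℕ)
        · exact SA.odd_dvd_half hnodd (htail2 i h4)
        · rcases SA.head_cases hN i h4 with h | h | h | h <;> subst h
          · exact hhead0
          · exact hhead1
          · exact hhead2
          · exact hhead3
      choose u hu using fun i => hall_i i
      have htu : 2 ∣ SA.tS u := by
        have h1 : SA.tS w = n * SA.tS u := by
          rw [SA.tS_congr (g := fun i => n * u i) (fun i _ => hu i), SA.tS_smul]
        exact SA.odd_factor hnodd (h1 ▸ hσ)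
      have hn1 : n = 1 := by
        rcases prim' n u htu (fun i => (hu i).symm) with h | h
        · exact h
        · omega
      have hsm2 : s = -2 := by omega
      -- tail is all odd
      have hsome : ∃ i : Fin (N+2), 4 ≤ (i:ℕ) ∧ ¬ 2 ∣ w i := by
        by_contra hc
        push_neg at hc
        have e1 : s = 2*(w 0 * w 1 + w 2 * w 3) - SA.tS (fun i => w i * w i) := by
          rw [hsdef, SA.IB_eq]; ring
        have h4t : (4:ℤ) ∣ SA.tS (fun i => w i * w i) := SA.dvd_tS (fun i h4 => by
          obtain ⟨c, hc2⟩ := hc i h4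
          exact ⟨c*c, by rw [hc2]; ring⟩)
        obtain ⟨tt, htt⟩ := h4t
        obtain ⟨a, ha⟩ := hh0
        obtain ⟨b, hb⟩ := hh2
        have : s = 4 * (a * w 1 + b * w 3 - tt) := by rw [e1, htt, ha, hb]; ring
        omega
      obtain ⟨i0, h4i0, hoi0⟩ := hsome
      have htodd : ∀ i : Fin (N+2), 4 ≤ (i:ℕ) → ¬ 2 ∣ w i := by
        intro i h4 h2
        have := hpair2 i i0 h4 h4i0
        omega
      -- decomposition w = 2c + chi
      have hdec : ∀ i : Fin (N+2), ∃ c, w i = 2 * c + SA.chi i := by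
        intro i
        by_cases h4 : 4 ≤ (i:ℕ)
        · have h1 := htodd i h4
          refine ⟨(w i - 1)/2, ?_⟩
          have hch : SA.chi i = 1 := by simp [SA.chi, h4]
          omega
        · have h1 := hheadev i h4
          refine ⟨w i / 2, ?_⟩
          have hch : SA.chi i = 0 := by simp [SA.chi, h4]
          omega
      choose cc hcc using hdec
      have hsexp : s = 4 * SA.IB cc cc + 4 * SA.IB cc (SA.chi (N := N)) + SA.IB (SA.chi (N := N)) (SA.chi (N := N)) := by
        rw [hsdef]
        conv_lhs => rw [show w = fun i => 2 * cc i + SA.chi i from funext hcc]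
        rw [SA.IB_expand (x := fun i => 2 * cc i) (y := SA.chi (N := N))]
        rw [SA.IB_smul_left, SA.IB_smul_right, SA.IB_smul_left]
        ring
      have hτ : SA.IB cc (SA.chi (N := N)) = - SA.tS cc := SA.IB_chi_right hN cc
      have hchi2 : SA.IB (SA.chi : Fin (N+2) → ℤ) SA.chi = -((N:ℤ) - 2) := SA.IB_chi_chi hN
      have hAτ : 2 ∣ SA.IB cc cc - SA.tS cc := by
        rcases Int.even_or_odd (SA.tS cc) with ⟨r, hr⟩ | ⟨r, hr⟩
        · have hA : 2 ∣ SA.IB cc cc := SA.IB_self_even hN ⟨r, by omega⟩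
          omega
        · set i4 : Fin (N+2) := ⟨4, by omega⟩ with hi4
          have h4i4 : 4 ≤ ((i4 : Fin (N+2)):ℕ) := le_refl 4
          have htc' : 2 ∣ SA.tS (fun i => cc i - SA.ee i4 i) := by
            rw [SA.tS_sub, SA.tS_ee]
            simp only [h4i4, if_pos]
            omega
          have hc'even := SA.IB_self_even hN htc'
          have hexp : SA.IB (fun i => cc i - SA.ee i4 i) (fun i => cc i - SA.ee i4 i)
              = SA.IB cc cc - 2 * SA.IB cc (SA.ee i4) + SA.IB (SA.ee i4) (SA.ee i4) := by
            rw [show (fun i => cc i - SA.ee i4 i) = fun i => cc i + (-1) * SA.ee i4 i from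
              funext fun i => by ring]
            rw [SA.IB_expand]
            rw [SA.IB_smul_right, SA.IB_smul_left, SA.IB_smul_right]
            ring
          rw [hexp] at hc'even
          have hIBee : SA.IB (SA.ee i4) (SA.ee i4) = -(SA.ee i4 i4) := SA.IB_ee_tail hN _ h4i4
          have hIBce : SA.IB cc (SA.ee i4) = -(cc i4) := SA.IB_ee_tail hN cc h4i4
          have heei : SA.ee i4 i4 = 1 := SA.ee_self i4
          omega
      obtain ⟨D, hD⟩ := hAτ
      have hN8 : N % 8 = 4 := by
        rw [hsm2, hτ, hchi2] at hsexp
        omega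
      right; right; right
      refine ⟨hN8, by rw [hsval, hsm2]; norm_num, ?_⟩
      unfold HasDiv
      constructor
      · intro x hx
        obtain ⟨y, hy, hyt⟩ := SA.int_of_mem hx
        obtain ⟨k, hk⟩ := hall y hyt
        refine ⟨k, ?_⟩
        rw [SA.lamform_cast v x w y hvw hy, hk]
        push_cast
        ring
      · refine ⟨fun i => ((-(w i) : ℤ):ℚ), SA.mem_of_int (fun _ => rfl)
          (by rw [show (fun i => -(w i)) = fun i => -w i from rfl, SA.tS_neg]; omega), ?_⟩
        rw [SA.lamform_cast v _ w (fun i => -(w i)) hvw (fun _ => rfl)]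
        rw [show SA.IB w (fun i => -(w i)) = - SA.IB w w from by
          rw [show (fun i => -(w i)) = fun i => -w i from rfl, SA.IB_neg_right]]
        rw [← hsdef, hsm2]
        norm_num
end
end

section
/- Let N ≡ 3 (mod 8) and let (Λ, ξ) be a decorated D-lattice of dimension N. Then there do not exist two non-proportional unigonal vectors v₁, v₂ ∈ Λ (each with square -4 and divisibility 4) spanning a negative definite sublattice. -/
noncomputable section

open scoped BigOperators

namespace St10

def ind {n : ℕ} (j : Fin n) (c : ℚ) : Fin n → ℚ := fun i => if i = j then c else 0

lemma ind_self {n : ℕ} (j : Fin n) (c : ℚ) : ind j c j = c := if_pos rfl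

lemma ind_ne {n : ℕ} (j : Fin n) (c : ℚ) (i : Fin n) (h : (i:ℕ) ≠ (j:ℕ)) : ind j c i = 0 := by
  unfold ind; rw [if_neg]; exact fun hh => h (congrArg Fin.val hh)

lemma sum_ind {N : ℕ} (v : Fin (N+2) → ℚ) (j : Fin (N+2)) (c : ℚ) :
    (∑ i : Fin (N+2), if 4 ≤ (i:ℕ) then v i * ind j c i else 0)
      = if 4 ≤ (j:ℕ) then v j * c else 0 := by
  have h : ∀ i : Fin (N+2), (if 4 ≤ (i:ℕ) then v i * ind j c i else 0)
      = if i = j then (if 4 ≤ (j:ℕ) then v j * c else 0) else 0 := by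
    intro i
    by_cases hij : i = j
    · subst hij; by_cases h4 : 4 ≤ (i:ℕ) <;> simp [h4, ind_self]
    · simp [ind, hij]
  rw [Finset.sum_congr rfl (fun i _ => h i), Finset.sum_ite_eq']
  simp

lemma sum_if_add {N : ℕ} (f g : Fin (N+2) → ℚ) :
    (∑ i : Fin (N+2), if 4 ≤ (i:ℕ) then f i + g i else 0)
    = (∑ i : Fin (N+2), if 4 ≤ (i:ℕ) then f i else 0)
      + (∑ i : Fin (N+2), if 4 ≤ (i:ℕ) then g i else 0) := by
  rw [← Finset.sum_add_distrib]
  exact Finset.sum_congr rfl fun i _ => by split <;> simp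

lemma LamForm_add_right {N : ℕ} (v x y : Fin (N+2) → ℚ) :
    LamForm N v (x + y) = LamForm N v x + LamForm N v y := by
  have h2 : (∑ i : Fin (N+2), if 4 ≤ (i:ℕ) then v i * (x i + y i) else 0)
      = (∑ i : Fin (N+2), if 4 ≤ (i:ℕ) then v i * x i else 0)
        + (∑ i : Fin (N+2), if 4 ≤ (i:ℕ) then v i * y i else 0) := by
    rw [← sum_if_add]
    exact Finset.sum_congr rfl fun i _ => by split <;> ring
  simp only [LamForm, Pi.add_apply, h2]; ring

lemma LamForm_comm {N : ℕ} (x y : Fin (N+2) → ℚ) : LamForm N x y = LamForm N y x := by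
  have h2 : (∑ i : Fin (N+2), if 4 ≤ (i:ℕ) then x i * y i else 0)
      = ∑ i : Fin (N+2), if 4 ≤ (i:ℕ) then y i * x i else 0 :=
    Finset.sum_congr rfl fun i _ => by split <;> ring
  simp only [LamForm, h2]; ring

lemma LamForm_smul_right {N : ℕ} (a : ℚ) (v x : Fin (N+2) → ℚ) :
    LamForm N v (a • x) = a * LamForm N v x := by
  have h2 : (∑ i : Fin (N+2), if 4 ≤ (i:ℕ) then v i * (a * x i) else 0)
      = a * ∑ i : Fin (N+2), if 4 ≤ (i:ℕ) then v i * x i else 0 := by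
    rw [Finset.mul_sum]
    exact Finset.sum_congr rfl fun i _ => by split <;> ring
  simp only [LamForm, Pi.smul_apply, smul_eq_mul, h2]
  ring

lemma LamForm_smul_left {N : ℕ} (a : ℚ) (x y : Fin (N+2) → ℚ) :
    LamForm N (a • x) y = a * LamForm N x y := by
  rw [LamForm_comm, LamForm_smul_right, LamForm_comm y x]

lemma LamForm_add_left {N : ℕ} (x y v : Fin (N+2) → ℚ) :
    LamForm N (x + y) v = LamForm N x v + LamForm N y v := by
  rw [LamForm_comm, LamForm_add_right, LamForm_comm v x, LamForm_comm v y]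

lemma LamForm_expand_add {N : ℕ} (x y : Fin (N+2) → ℚ) :
    LamForm N (x+y) (x+y) = LamForm N x x + 2 * LamForm N x y + LamForm N y y := by
  rw [LamForm_add_left, LamForm_add_right, LamForm_add_right, LamForm_comm y x]; ring

lemma LamForm_expand_sub {N : ℕ} (x y : Fin (N+2) → ℚ) :
    LamForm N (x-y) (x-y) = LamForm N x x - 2 * LamForm N x y + LamForm N y y := by
  have h : x - y = x + (-1 : ℚ) • y := by
    ext i; simp [sub_eq_add_neg]
  rw [h, LamForm_expand_add]
  simp only [LamForm_smul_right, LamForm_smul_left]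
  ring

lemma sum_ind_one {N : ℕ} (j : Fin (N+2)) (c : ℚ) :
    (∑ i : Fin (N+2), if 4 ≤ (i:ℕ) then ind j c i else 0) = if 4 ≤ (j:ℕ) then c else 0 := by
  have h := sum_ind (fun _ => (1:ℚ)) j c
  simp only [one_mul] at h
  rw [← h]

lemma ind_mem_one {N : ℕ} (j : Fin (N+2)) (hj : (j:ℕ) < 4) : ind j 1 ∈ LamSet N := by
  constructor
  · intro i
    by_cases hij : i = j
    · exact ⟨1, by simp [hij, ind_self]⟩
    · exact ⟨0, by simp [ind, hij]⟩
  · refine ⟨0, ?_⟩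
    rw [sum_ind_one, if_neg (by omega)]
    norm_num

lemma ind_mem_two {N : ℕ} (j : Fin (N+2)) (hj : 4 ≤ (j:ℕ)) : ind j 2 ∈ LamSet N := by
  constructor
  · intro i
    by_cases hij : i = j
    · exact ⟨2, by simp [hij, ind_self]⟩
    · exact ⟨0, by simp [ind, hij]⟩
  · refine ⟨1, ?_⟩
    rw [sum_ind_one, if_pos hj]
    norm_num

lemma ind_pair_mem {N : ℕ} (p q : Fin (N+2)) (hpq : p ≠ q)
    (hp : 4 ≤ (p:ℕ)) (hq : 4 ≤ (q:ℕ)) : ind p 1 + ind q 1 ∈ LamSet N := by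
  constructor
  · intro i
    by_cases hip : i = p
    · refine ⟨1, ?_⟩
      have hiq : i ≠ q := by rw [hip]; exact hpq
      simp [Pi.add_apply, ind, hip, hiq, hpq, Ne.symm hpq]
    · by_cases hiq : i = q
      · refine ⟨1, ?_⟩
        simp [Pi.add_apply, ind, hip, hiq, hpq, Ne.symm hpq]
      · exact ⟨0, by simp [Pi.add_apply, ind, hip, hiq]⟩
  · refine ⟨1, ?_⟩
    have hsplit : (∑ i : Fin (N+2), if 4 ≤ (i:ℕ) then (ind p 1 + ind q 1) i else 0)
        = (∑ i : Fin (N+2), if 4 ≤ (i:ℕ) then ind p 1 i else 0)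
          + (∑ i : Fin (N+2), if 4 ≤ (i:ℕ) then ind q 1 i else 0) := by
      rw [← sum_if_add]; rfl
    rw [hsplit, sum_ind_one, sum_ind_one, if_pos hp, if_pos hq]
    norm_num

lemma LamForm_ind {N : ℕ} (v : Fin (N+2) → ℚ) (j : Fin (N+2)) (c : ℚ) :
    LamForm N v (ind j c) =
      v 0 * ind j c 1 + v 1 * ind j c 0 + v 2 * ind j c 3 + v 3 * ind j c 2
        - (if 4 ≤ (j:ℕ) then v j * c else 0) := by
  simp only [LamForm, sum_ind]

lemma unigonal_struct {N : ℕ} (hN : 3 ≤ N) (v : Fin (N+2) → ℚ)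
    (hs : LamForm N v v = -4) (hd : HasDiv N v 4) :
    ∃ (U : Fin (N+2) → ℤ) (a0 a1 a2 a3 : ℤ),
      v 0 = 4*(a0:ℚ) ∧ v 1 = 4*(a1:ℚ) ∧ v 2 = 4*(a2:ℚ) ∧ v 3 = 4*(a3:ℚ) ∧
      (∀ i : Fin (N+2), 4 ≤ (i:ℕ) → v i = 2 * (U i : ℚ)) ∧
      (∀ i ∈ Finset.univ.filter (fun i : Fin (N+2) => 4 ≤ (i:ℕ)), ¬ ((2:ℤ) ∣ U i)) ∧
      ¬ ((2:ℤ) ∣ ∑ i ∈ Finset.univ.filter (fun i : Fin (N+2) => 4 ≤ (i:ℕ)), U i ^ 2) := by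
  classical
  obtain ⟨hdiv, -⟩ := hd
  have c0 : ((0 : Fin (N+2)) : ℕ) = 0 := rfl
  have c1 : ((1 : Fin (N+2)) : ℕ) = 1 := rfl
  have c2 : ((2 : Fin (N+2)) : ℕ) = 2 := by
    have h : ((2 : Fin (N+2)) : ℕ) = 2 % (N+2) := rfl
    rw [h]; exact Nat.mod_eq_of_lt (by omega)
  have c3 : ((3 : Fin (N+2)) : ℕ) = 3 := by
    have h : ((3 : Fin (N+2)) : ℕ) = 3 % (N+2) := rfl
    rw [h]; exact Nat.mod_eq_of_lt (by omega)
  have h0 : ∃ a : ℤ, v 0 = 4*(a:ℚ) := by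
    obtain ⟨a, ha⟩ := hdiv (ind (1 : Fin (N+2)) 1) (ind_mem_one _ (by rw [c1]; omega))
    rw [LamForm_ind, if_neg (by rw [c1]; omega), ind_self,
      ind_ne _ _ _ (by rw [c0, c1]; omega), ind_ne _ _ _ (by rw [c3, c1]; omega),
      ind_ne _ _ _ (by rw [c2, c1]; omega)] at ha
    exact ⟨a, by push_cast at ha ⊢; linarith⟩
  have h1 : ∃ a : ℤ, v 1 = 4*(a:ℚ) := by
    obtain ⟨a, ha⟩ := hdiv (ind (0 : Fin (N+2)) 1) (ind_mem_one _ (by rw [c0]; omega))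
    rw [LamForm_ind, if_neg (by rw [c0]; omega), ind_self,
      ind_ne _ _ _ (by rw [c1, c0]; omega), ind_ne _ _ _ (by rw [c3, c0]; omega),
      ind_ne _ _ _ (by rw [c2, c0]; omega)] at ha
    exact ⟨a, by push_cast at ha ⊢; linarith⟩
  have h2 : ∃ a : ℤ, v 2 = 4*(a:ℚ) := by
    obtain ⟨a, ha⟩ := hdiv (ind (3 : Fin (N+2)) 1) (ind_mem_one _ (by rw [c3]; omega))
    rw [LamForm_ind, if_neg (by rw [c3]; omega), ind_self,
      ind_ne _ _ _ (by rw [c1, c3]; omega), ind_ne _ _ _ (by rw [c0, c3]; omega),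
      ind_ne _ _ _ (by rw [c2, c3]; omega)] at ha
    exact ⟨a, by push_cast at ha ⊢; linarith⟩
  have h3 : ∃ a : ℤ, v 3 = 4*(a:ℚ) := by
    obtain ⟨a, ha⟩ := hdiv (ind (2 : Fin (N+2)) 1) (ind_mem_one _ (by rw [c2]; omega))
    rw [LamForm_ind, if_neg (by rw [c2]; omega), ind_self,
      ind_ne _ _ _ (by rw [c1, c2]; omega), ind_ne _ _ _ (by rw [c0, c2]; omega),
      ind_ne _ _ _ (by rw [c3, c2]; omega)] at ha
    exact ⟨a, by push_cast at ha ⊢; linarith⟩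
  obtain ⟨a0, ha0⟩ := h0
  obtain ⟨a1, ha1⟩ := h1
  obtain ⟨a2, ha2⟩ := h2
  obtain ⟨a3, ha3⟩ := h3
  have hUex : ∀ i : Fin (N+2), ∃ u : ℤ, (4 ≤ (i:ℕ) → v i = 2 * (u:ℚ)) := by
    intro i
    by_cases h4 : 4 ≤ (i:ℕ)
    · obtain ⟨a, ha⟩ := hdiv (ind i 2) (ind_mem_two i h4)
      rw [LamForm_ind, if_pos h4,
        ind_ne _ _ _ (by rw [c1]; omega), ind_ne _ _ _ (by rw [c0]; omega),
        ind_ne _ _ _ (by rw [c3]; omega), ind_ne _ _ _ (by rw [c2]; omega)] at ha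
      exact ⟨-a, fun _ => by push_cast at ha ⊢; linarith⟩
    · exact ⟨0, fun h => absurd h h4⟩
  choose U hU using hUex
  have hpair : ∀ p q : Fin (N+2), 4 ≤ (p:ℕ) → 4 ≤ (q:ℕ) → p ≠ q → (2:ℤ) ∣ U p + U q := by
    intro p q hp hq hpq
    obtain ⟨a, ha⟩ := hdiv (ind p 1 + ind q 1) (ind_pair_mem p q hpq hp hq)
    rw [LamForm_add_right, LamForm_ind, LamForm_ind, if_pos hp, if_pos hq,
      ind_ne p _ _ (by rw [c1]; omega), ind_ne p _ _ (by rw [c0]; omega),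
      ind_ne p _ _ (by rw [c3]; omega), ind_ne p _ _ (by rw [c2]; omega),
      ind_ne q _ _ (by rw [c1]; omega), ind_ne q _ _ (by rw [c0]; omega),
      ind_ne q _ _ (by rw [c3]; omega), ind_ne q _ _ (by rw [c2]; omega),
      hU p hp, hU q hq] at ha
    refine ⟨-a, ?_⟩
    have hcast : (U p:ℚ) + U q = 2 * ((-a:ℤ):ℚ) := by push_cast at ha ⊢; linarith
    exact_mod_cast hcast
  set T := Finset.univ.filter (fun i : Fin (N+2) => 4 ≤ (i:ℕ)) with hT
  have hsum : (∑ i : Fin (N+2), if 4 ≤ (i:ℕ) then v i * v i else 0)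
      = 4 * ((∑ i ∈ T, U i ^ 2 : ℤ) : ℚ) := by
    have hc : ((∑ i ∈ T, U i ^ 2 : ℤ) : ℚ) = ∑ i ∈ T, (U i : ℚ)^2 := by push_cast; rfl
    rw [hT, ← Finset.sum_filter, hc, Finset.mul_sum]
    refine Finset.sum_congr rfl fun i hi => ?_
    have h4 : 4 ≤ (i:ℕ) := (Finset.mem_filter.mp hi).2
    rw [hU i h4]; ring
  have hsq : (∑ i ∈ T, U i ^ 2) = 1 + 8*(a0*a1 + a2*a3) := by
    rw [LamForm, hsum, ha0, ha1, ha2, ha3] at hs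
    have hcast : ((∑ i ∈ T, U i ^ 2 : ℤ):ℚ) = ((1 + 8*(a0*a1+a2*a3) : ℤ):ℚ) := by
      push_cast at hs ⊢
      linear_combination (-1/4 : ℚ) * hs
    exact_mod_cast hcast
  have hsumodd : ¬ ((2:ℤ) ∣ ∑ i ∈ T, U i ^ 2) := by rw [hsq]; omega
  have hodd : ∀ i ∈ T, ¬ ((2:ℤ) ∣ U i) := by
    by_contra hc
    push_neg at hc
    obtain ⟨i0, hi0T, hi0⟩ := hc
    have hall : ∀ j ∈ T, (2:ℤ) ∣ U j := by
      intro j hjT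
      by_cases hji : j = i0
      · rw [hji]; exact hi0
      · have h4j : 4 ≤ (j:ℕ) := by rw [hT] at hjT; exact (Finset.mem_filter.mp hjT).2
        have h4i : 4 ≤ (i0:ℕ) := by rw [hT] at hi0T; exact (Finset.mem_filter.mp hi0T).2
        have hpq := hpair j i0 h4j h4i hji
        omega
    exact hsumodd (Finset.dvd_sum fun i hi => dvd_pow (hall i hi) (by norm_num))
  exact ⟨U, a0, a1, a2, a3, ha0, ha1, ha2, ha3, fun i h => hU i h, hodd, hsumodd⟩

end St10

/-- Let `N ≡ 3 (mod 8)` and let `(Λ, ξ)` be a decorated `D`-lattice of dimension `N`.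
If `v₁, v₂` are non-proportional unigonal vectors (square `-4`, divisibility `4`)
spanning a negative definite sublattice, then `v₁ ⊥ v₂`; moreover this situation cannot
occur at all. -/
theorem statement10 (N : ℕ) (hN : 3 ≤ N) (hmod : N % 8 = 3)
    (v₁ v₂ : Fin (N + 2) → ℚ)
    (h₁ : v₁ ∈ LamSet N) (h₂ : v₂ ∈ LamSet N)
    (hs₁ : LamForm N v₁ v₁ = -4) (hs₂ : LamForm N v₂ v₂ = -4)
    (hd₁ : HasDiv N v₁ 4) (hd₂ : HasDiv N v₂ 4)
    (hindep : ∀ a b : ℚ, a • v₁ + b • v₂ = 0 → a = 0 ∧ b = 0)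
    (hnegdef : ∀ a b : ℚ, ¬(a = 0 ∧ b = 0) →
      LamForm N (a • v₁ + b • v₂) (a • v₁ + b • v₂) < 0) :
    LamForm N v₁ v₂ = 0 ∧ False := by
  classical
  obtain ⟨U1, a0, a1, a2, a3, h10, h11, h12, h13, hU1, hodd1, hsodd1⟩ :=
    St10.unigonal_struct hN v₁ hs₁ hd₁
  obtain ⟨U2, b0, b1, b2, b3, h20, h21, h22, h23, hU2, hodd2, -⟩ :=
    St10.unigonal_struct hN v₂ hs₂ hd₂
  set T := Finset.univ.filter (fun i : Fin (N+2) => 4 ≤ (i:ℕ)) with hT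
  have hcross : (∑ i : Fin (N+2), if 4 ≤ (i:ℕ) then v₁ i * v₂ i else 0)
      = 4 * ((∑ i ∈ T, U1 i * U2 i : ℤ) : ℚ) := by
    have hc : ((∑ i ∈ T, U1 i * U2 i : ℤ) : ℚ) = ∑ i ∈ T, (U1 i : ℚ) * (U2 i : ℚ) := by
      push_cast; rfl
    rw [hT, ← Finset.sum_filter, hc, Finset.mul_sum]
    refine Finset.sum_congr rfl fun i hi => ?_
    have h4 : 4 ≤ (i:ℕ) := (Finset.mem_filter.mp hi).2
    rw [hU1 i h4, hU2 i h4]; ring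
  obtain ⟨m, hm⟩ := hd₁.1 v₂ h₂
  have hFc : LamForm N v₁ v₂
      = 16*((a0*b1 + a1*b0 + a2*b3 + a3*b2 : ℤ):ℚ)
        - 4*((∑ i ∈ T, U1 i * U2 i : ℤ):ℚ) := by
    rw [LamForm, hcross, h10, h11, h12, h13, h20, h21, h22, h23]
    push_cast
    ring
  have hmZ : m = 4*(a0*b1 + a1*b0 + a2*b3 + a3*b2) - (∑ i ∈ T, U1 i * U2 i) := by
    have hq : (m:ℚ)
        = ((4*(a0*b1 + a1*b0 + a2*b3 + a3*b2) - (∑ i ∈ T, U1 i * U2 i) : ℤ):ℚ) := by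
      rw [hm] at hFc
      push_cast at hFc ⊢
      linarith
    exact_mod_cast hq
  have hSodd : ¬ ((2:ℤ) ∣ ∑ i ∈ T, U1 i * U2 i) := by
    have hdiff : (2:ℤ) ∣ ((∑ i ∈ T, U1 i * U2 i) - ∑ i ∈ T, U1 i ^ 2) := by
      rw [← Finset.sum_sub_distrib]
      refine Finset.dvd_sum fun i hi => ?_
      have o1 := hodd1 i hi
      have o2 := hodd2 i hi
      have hrw : U1 i * U2 i - U1 i ^ 2 = U1 i * (U2 i - U1 i) := by ring
      rw [hrw]
      exact Dvd.dvd.mul_left (by omega : (2:ℤ) ∣ (U2 i - U1 i)) _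
    omega
  have hb1 : LamForm N (v₁ + v₂) (v₁ + v₂) < 0 := by
    have h := hnegdef 1 1 (by norm_num)
    simpa using h
  have hb2 : LamForm N (v₁ - v₂) (v₁ - v₂) < 0 := by
    have h := hnegdef 1 (-1) (by norm_num)
    rw [one_smul, show (-1:ℚ) • v₂ = -v₂ from by ext i; simp, ← sub_eq_add_neg] at h
    exact h
  rw [St10.LamForm_expand_add, hs₁, hs₂] at hb1
  rw [St10.LamForm_expand_sub, hs₁, hs₂] at hb2
  rw [hm] at hb1 hb2
  push_cast at hb1 hb2
  have h1 : (-1:ℤ) < m := by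
    have : (-1:ℚ) < (m:ℚ) := by linarith
    exact_mod_cast this
  have h2 : m < 1 := by
    have : (m:ℚ) < 1 := by linarith
    exact_mod_cast this
  have hm0 : m = 0 := by omega
  refine ⟨by rw [hm, hm0]; norm_num, ?_⟩
  rw [hm0] at hmZ
  exact hSodd ⟨2*(a0*b1 + a1*b0 + a2*b3 + a3*b2), by linarith⟩
end
end
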